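/- arXiv:1706.08118 — 5 statements merged into one kernel-verified Lean document; each statement's English description precedes it below -/
import Mathlib

section
/- If E ⊆ ℝ^d satisfies ℋ^h(E) > 0 for every dimension function h with h ≺ x^d, then E has positive d-dimensional Lebesgue measure. -/
open MeasureTheory Filter Set

/-- A dimension function: vanishes at 0, positive on positives, increasing,
right-continuous. -/
def IsDimFun (h : ℝ → ℝ) : Prop :=
  h 0 = 0 ∧ (∀ t > 0, 0 < h t) ∧ MonotoneOn h (Set.Ici 0) ∧
    ∀ t ∈ Set.Ici (0 : ℝ), ContinuousWithinAt h (Set.Ici t) t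

/-- The Hausdorff measure associated to a gauge (dimension) function `h`. -/
noncomputable def gaugeMeasure {X : Type*} [EMetricSpace X] [MeasurableSpace X]
    [BorelSpace X] (h : ℝ → ℝ) : Measure X :=
  Measure.mkMetric fun r => ENNReal.ofReal (h r.toReal)

/-- `Prec h₂ h₁` means `h₂ ≺ h₁`, i.e. `lim_{x→0⁺} h₁ x / h₂ x = 0`. -/
def Prec (h₂ h₁ : ℝ → ℝ) : Prop :=
  Tendsto (fun x => h₁ x / h₂ x) (nhdsWithin 0 (Set.Ioi 0)) (nhds 0)

/-!
If `volume E = 0` then `μH[d] E = 0`, both being Haar measures. So for every `k` there is a cover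
of `E` by sets of diameter at most `1 / (k + 1)` with `∑ diam ^ d < 2 ^ (-k)`, and all these sets
together form a single family with `∑ diam ^ d < ∞`.

For positive `δ` with `δ (j + 1) ≤ δ j / 4`, the gauge `h t = ⨅ j, 2 ^ j * max t (δ j) ^ d` is a
dimension function with `2 ^ j * t ^ d ≤ h t` for `t ≤ δ j`, hence `h ≻ x ^ d`, while
`h t ≤ t ^ d * (1 + ∑_{t < δ i} 2 ^ i)`. Choosing `δ i` so small that the members of the family of
diameter below `δ i` contribute at most `4 ^ (-i)` to `∑ diam ^ d` makes `∑ h (diam)` over the whole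
family finite. Hence the `h`-sums of the individual covers tend to `0`, and `ℋ^h E = 0`.
-/

open Metric
open scoped NNReal ENNReal Topology

variable {d : ℕ} {δ : ℕ → ℝ}

lemma two_pow_mul_pow_succ_le (hd : 0 < d) (hδ : ∀ j, 0 ≤ δ j)
    (hδ4 : ∀ j, δ (j + 1) ≤ δ j / 4) (j : ℕ) :
    (2 : ℝ) ^ (j + 1) * δ (j + 1) ^ d ≤ 2⁻¹ * (2 ^ j * δ j ^ d) := by
  have hquarter : δ (j + 1) ^ d ≤ δ j ^ d / 4 := calc
    δ (j + 1) ^ d ≤ (δ j / 4) ^ d := pow_le_pow_left₀ (hδ _) (hδ4 j) d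
    _ = δ j ^ d / 4 ^ d := div_pow _ _ _
    _ ≤ δ j ^ d / 4 := div_le_div_of_nonneg_left (pow_nonneg (hδ j) d) (by norm_num)
      (le_self_pow₀ (by norm_num) hd.ne')
  calc (2 : ℝ) ^ (j + 1) * δ (j + 1) ^ d ≤ 2 ^ (j + 1) * (δ j ^ d / 4) := by gcongr
    _ = 2⁻¹ * (2 ^ j * δ j ^ d) := by ring

lemma antitone_two_pow_mul_pow (hd : 0 < d) (hδ : ∀ j, 0 ≤ δ j)
    (hδ4 : ∀ j, δ (j + 1) ≤ δ j / 4) : Antitone fun j => (2 : ℝ) ^ j * δ j ^ d :=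
  antitone_nat_of_succ_le fun j => (two_pow_mul_pow_succ_le hd hδ hδ4 j).trans <|
    mul_le_of_le_one_left (mul_nonneg (by positivity) (pow_nonneg (hδ j) d)) (by norm_num)

lemma tendsto_two_pow_mul_pow_atTop (hd : 0 < d) (hδ : ∀ j, 0 ≤ δ j)
    (hδ4 : ∀ j, δ (j + 1) ≤ δ j / 4) :
    Tendsto (fun j => (2 : ℝ) ^ j * δ j ^ d) atTop (𝓝 0) := by
  have hgeom : Tendsto (fun j => (2 : ℝ)⁻¹ ^ j * (2 ^ 0 * δ 0 ^ d)) atTop (𝓝 0) := by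
    simpa only [zero_mul] using (tendsto_pow_atTop_nhds_zero_of_lt_one (r := (2 : ℝ)⁻¹)
      (by norm_num) (by norm_num)).mul_const (2 ^ 0 * δ 0 ^ d)
  refine squeeze_zero (fun j => mul_nonneg (by positivity) (pow_nonneg (hδ j) d))
    (fun j => ?_) hgeom
  exact le_geom (u := fun j => (2 : ℝ) ^ j * δ j ^ d) (by norm_num) j
    fun k _ => two_pow_mul_pow_succ_le hd hδ hδ4 k

lemma exists_le_of_le_div_four (hd : 0 < d) (hδ : ∀ j, 0 ≤ δ j)
    (hδ4 : ∀ j, δ (j + 1) ≤ δ j / 4) {t : ℝ} (ht : 0 < t) : ∃ j, δ j ≤ t := by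
  obtain ⟨j, hj⟩ :=
    ((tendsto_two_pow_mul_pow_atTop hd hδ hδ4).eventually (gt_mem_nhds (pow_pos ht d))).exists
  refine ⟨j, (pow_le_pow_iff_left₀ (hδ j) ht.le hd.ne').1 (le_trans ?_ hj.le)⟩
  exact le_mul_of_one_le_left (pow_nonneg (hδ j) d) (one_le_pow₀ one_le_two)

noncomputable def besicovitchGauge (d : ℕ) (δ : ℕ → ℝ) (t : ℝ) : ℝ :=
  ⨅ j : ℕ, 2 ^ j * max t (δ j) ^ d

lemma besicovitchGauge_term_nonneg (hδ : ∀ j, 0 ≤ δ j) (t : ℝ) (j : ℕ) :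
    0 ≤ (2 : ℝ) ^ j * max t (δ j) ^ d :=
  mul_nonneg (by positivity) (pow_nonneg ((hδ j).trans (le_max_right _ _)) d)

lemma bddBelow_besicovitchGauge_terms (hδ : ∀ j, 0 ≤ δ j) (t : ℝ) :
    BddBelow (range fun j : ℕ => (2 : ℝ) ^ j * max t (δ j) ^ d) :=
  ⟨0, by rintro _ ⟨j, rfl⟩; exact besicovitchGauge_term_nonneg hδ t j⟩

lemma besicovitchGauge_le_term (hδ : ∀ j, 0 ≤ δ j) (t : ℝ) (j : ℕ) :
    besicovitchGauge d δ t ≤ 2 ^ j * max t (δ j) ^ d :=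
  ciInf_le (bddBelow_besicovitchGauge_terms hδ t) j

lemma besicovitchGauge_nonneg (hδ : ∀ j, 0 ≤ δ j) (t : ℝ) : 0 ≤ besicovitchGauge d δ t :=
  le_ciInf (besicovitchGauge_term_nonneg hδ t)

lemma pow_le_besicovitchGauge {t : ℝ} (ht : 0 ≤ t) : t ^ d ≤ besicovitchGauge d δ t :=
  le_ciInf fun j => calc
    t ^ d ≤ max t (δ j) ^ d := pow_le_pow_left₀ ht (le_max_left _ _) d
    _ ≤ 2 ^ j * max t (δ j) ^ d :=
      le_mul_of_one_le_left (pow_nonneg (ht.trans (le_max_left _ _)) d) (one_le_pow₀ one_le_two)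

lemma monotone_besicovitchGauge (hδ : ∀ j, 0 ≤ δ j) : Monotone (besicovitchGauge d δ) :=
  fun _ _ hst => ciInf_mono (bddBelow_besicovitchGauge_terms hδ _) fun j =>
    mul_le_mul_of_nonneg_left (pow_le_pow_left₀ ((hδ j).trans (le_max_right _ _))
      (max_le_max hst le_rfl) d) (by positivity)

lemma upperSemicontinuous_besicovitchGauge (hδ : ∀ j, 0 ≤ δ j) :
    UpperSemicontinuous (besicovitchGauge d δ) :=
  upperSemicontinuous_ciInf (bddBelow_besicovitchGauge_terms hδ) fun _ =>
    (continuous_const.mul ((continuous_id.max continuous_const).pow d)).upperSemicontinuous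

lemma continuousWithinAt_Ici_besicovitchGauge (hδ : ∀ j, 0 ≤ δ j) (t : ℝ) :
    ContinuousWithinAt (besicovitchGauge d δ) (Ici t) t := by
  refine tendsto_order.2 ⟨fun b hb => ?_, fun b hb => ?_⟩
  · filter_upwards [self_mem_nhdsWithin] with s hs
    exact hb.trans_le (monotone_besicovitchGauge hδ hs)
  · exact nhdsWithin_le_nhds (upperSemicontinuous_besicovitchGauge hδ t b hb)

lemma besicovitchGauge_zero (hd : 0 < d) (hδ : ∀ j, 0 ≤ δ j)
    (hδ4 : ∀ j, δ (j + 1) ≤ δ j / 4) : besicovitchGauge d δ 0 = 0 :=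
  le_antisymm (ge_of_tendsto (tendsto_two_pow_mul_pow_atTop hd hδ hδ4)
      (Eventually.of_forall fun j =>
        (besicovitchGauge_le_term hδ 0 j).trans_eq (by rw [max_eq_right (hδ j)])))
    (besicovitchGauge_nonneg hδ 0)

/-- For `t ≤ δ j` the terms of index `≥ j` are at least `2 ^ j * t ^ d`, and the earlier ones
are at least `2 ^ j * δ j ^ d` because `2 ^ i * δ i ^ d` decreases. -/
lemma two_pow_mul_pow_le_besicovitchGauge (hd : 0 < d) (hδ : ∀ j, 0 ≤ δ j)
    (hδ4 : ∀ j, δ (j + 1) ≤ δ j / 4) {t : ℝ} {j : ℕ} (ht : 0 ≤ t) (htj : t ≤ δ j) :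
    2 ^ j * t ^ d ≤ besicovitchGauge d δ t := by
  refine le_ciInf fun i => ?_
  rcases le_total j i with hji | hij
  · gcongr
    · exact one_le_two
    · exact le_max_left _ _
  · calc (2 : ℝ) ^ j * t ^ d ≤ 2 ^ j * δ j ^ d := by gcongr
      _ ≤ 2 ^ i * δ i ^ d := antitone_two_pow_mul_pow hd hδ hδ4 hij
      _ ≤ 2 ^ i * max t (δ i) ^ d := by
        gcongr
        · exact hδ i
        · exact le_max_right _ _

lemma prec_besicovitchGauge (hd : 0 < d) (hδ : ∀ j, 0 < δ j)
    (hδ4 : ∀ j, δ (j + 1) ≤ δ j / 4) : Prec (besicovitchGauge d δ) fun x => x ^ d := by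
  refine tendsto_order.2 ⟨fun b hb => ?_, fun ε hε => ?_⟩
  · filter_upwards [self_mem_nhdsWithin] with x (hx : 0 < x)
    exact hb.trans_le (div_nonneg (pow_nonneg hx.le d) (besicovitchGauge_nonneg (hδ · |>.le) x))
  · obtain ⟨j, hj⟩ := exists_pow_lt_of_lt_one hε (by norm_num : (2 : ℝ)⁻¹ < 1)
    filter_upwards [Ioo_mem_nhdsGT (hδ j)] with x ⟨hx, hxj⟩
    calc x ^ d / besicovitchGauge d δ x ≤ x ^ d / (2 ^ j * x ^ d) :=
          div_le_div_of_nonneg_left (pow_nonneg hx.le d) (by positivity)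
            (two_pow_mul_pow_le_besicovitchGauge hd (hδ · |>.le) hδ4 hx.le hxj.le)
      _ = 2⁻¹ ^ j := by rw [div_mul_cancel_right₀ (pow_pos hx d).ne', inv_pow]
      _ < ε := hj

lemma isDimFun_besicovitchGauge (hd : 0 < d) (hδ : ∀ j, 0 ≤ δ j)
    (hδ4 : ∀ j, δ (j + 1) ≤ δ j / 4) : IsDimFun (besicovitchGauge d δ) :=
  ⟨besicovitchGauge_zero hd hδ hδ4, fun _ ht => (pow_pos ht d).trans_le
    (pow_le_besicovitchGauge ht.le), (monotone_besicovitchGauge hδ).monotoneOn _,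
    fun t _ => continuousWithinAt_Ici_besicovitchGauge hδ t⟩

lemma ofReal_besicovitchGauge_le (hd : 0 < d) (hδ : ∀ j, 0 ≤ δ j)
    (hδ4 : ∀ j, δ (j + 1) ≤ δ j / 4) (t : ℝ) :
    ENNReal.ofReal (besicovitchGauge d δ t) ≤ ENNReal.ofReal t ^ d +
      ∑' i, 2 ^ i * (Iio (δ i)).indicator (fun s => ENNReal.ofReal s ^ d) t := by
  classical
  rcases le_or_gt t 0 with ht | ht
  · rw [ENNReal.ofReal_eq_zero.2
      ((monotone_besicovitchGauge hδ ht).trans_eq (besicovitchGauge_zero hd hδ hδ4))]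
    exact zero_le
  have hex := exists_le_of_le_div_four hd hδ hδ4 ht
  set j := Nat.find hex
  have hgeom : ∀ n : ℕ, (2 : ℝ≥0∞) ^ n ≤ 1 + ∑ i ∈ Finset.range n, 2 ^ i := by
    intro n
    induction n with
    | zero => simp
    | succ n ih => rw [Finset.sum_range_succ, pow_succ, mul_two, ← add_assoc]; gcongr
  calc ENNReal.ofReal (besicovitchGauge d δ t) ≤ ENNReal.ofReal (2 ^ j * t ^ d) :=
        ENNReal.ofReal_le_ofReal <|
          (besicovitchGauge_le_term hδ t j).trans_eq (by rw [max_eq_left (Nat.find_spec hex)])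
    _ = 2 ^ j * ENNReal.ofReal t ^ d := by
        rw [ENNReal.ofReal_mul (by positivity), ENNReal.ofReal_pow ht.le, ENNReal.ofReal_pow
          zero_le_two, ENNReal.ofReal_ofNat]
    _ ≤ (1 + ∑ i ∈ Finset.range j, 2 ^ i) * ENNReal.ofReal t ^ d := by gcongr; exact hgeom j
    _ = ENNReal.ofReal t ^ d +
        ∑ i ∈ Finset.range j, 2 ^ i * (Iio (δ i)).indicator (fun s => ENNReal.ofReal s ^ d) t := by
        rw [add_mul, one_mul, Finset.sum_mul]
        refine congrArg _ (Finset.sum_congr rfl fun i hi => ?_)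
        rw [indicator_of_mem (mem_Iio.2 (not_le.1 (Nat.find_min hex (Finset.mem_range.1 hi))))]
    _ ≤ _ := add_le_add_right (ENNReal.sum_le_tsum _) _

lemma exists_pos_tsum_indicator_Iio_le {ι : Type*} (hd : 0 < d) (a : ι → ℝ)
    (hsum : ∑' k, ENNReal.ofReal (a k) ^ d ≠ ∞) {ε : ℝ≥0∞} (hε : 0 < ε) :
    ∃ η > 0, ∑' k, (Iio η).indicator (fun s => ENNReal.ofReal s ^ d) (a k) ≤ ε := by
  obtain ⟨s, hs⟩ := ((ENNReal.tendsto_tsum_compl_atTop_zero hsum).eventually_lt_const hε).exists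
  have hvanish : ∀ k, ∀ᶠ η in 𝓝[>] (0 : ℝ),
      (Iio η).indicator (fun s => ENNReal.ofReal s ^ d) (a k) = 0 := by
    intro k
    rcases le_or_gt (a k) 0 with hk | hk
    · refine Eventually.of_forall fun η => indicator_apply_eq_zero.2 fun _ => ?_
      rw [ENNReal.ofReal_of_nonpos hk, zero_pow hd.ne']
    · filter_upwards [Ioo_mem_nhdsGT hk] with η hη
      exact indicator_of_notMem (s := Iio η) (not_lt.2 hη.2.le) _
  obtain ⟨η, hη, hηs⟩ :=
    (eventually_mem_nhdsWithin.and ((s.eventually_all).2 fun k _ => hvanish k)).exists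
  refine ⟨η, hη, ?_⟩
  calc ∑' k, (Iio η).indicator (fun s => ENNReal.ofReal s ^ d) (a k)
      ≤ ∑' k, {k | k ∉ s}.indicator (fun k => ENNReal.ofReal (a k) ^ d) k := by
        refine ENNReal.tsum_le_tsum fun k => ?_
        by_cases hk : k ∈ s
        · rw [hηs k hk]
          exact zero_le
        · rw [indicator_of_mem (show k ∈ {k | k ∉ s} from hk)]
          exact indicator_le_self _ _ _
    _ = ∑' k : {k // k ∉ s}, ENNReal.ofReal (a k) ^ d := (tsum_subtype _ _).symm
    _ ≤ ε := hs.le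

lemma exists_pos_seq_le_div_four_le (η : ℕ → ℝ) (hη : ∀ j, 0 < η j) :
    ∃ δ : ℕ → ℝ, (∀ j, 0 < δ j) ∧ (∀ j, δ (j + 1) ≤ δ j / 4) ∧ ∀ j, δ j ≤ η j := by
  have hne (j : ℕ) : (Finset.range (j + 1)).Nonempty := Finset.nonempty_range_add_one
  have hinf (j : ℕ) : 0 < (Finset.range (j + 1)).inf' (hne j) η :=
    (Finset.lt_inf'_iff _).2 fun i _ => hη i
  refine ⟨fun j => 4⁻¹ ^ j * (Finset.range (j + 1)).inf' (hne j) η,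
    fun j => mul_pos (by positivity) (hinf j), fun j => ?_, fun j => ?_⟩
  · calc (4 : ℝ)⁻¹ ^ (j + 1) * (Finset.range (j + 1 + 1)).inf' (hne _) η
        ≤ 4⁻¹ ^ (j + 1) * (Finset.range (j + 1)).inf' (hne j) η :=
          mul_le_mul_of_nonneg_left
            (Finset.inf'_mono η (Finset.range_subset_range.2 (Nat.le_succ _)) (hne j))
            (by positivity)
      _ = 4⁻¹ ^ j * (Finset.range (j + 1)).inf' (hne j) η / 4 := by ring
  · exact (mul_le_of_le_one_left (hinf j).le (pow_le_one₀ (by norm_num) (by norm_num))).trans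
      (Finset.inf'_le η (Finset.self_mem_range_succ j))

lemma exists_besicovitchGauge_tsum_ne_top {ι : Type*} (hd : 0 < d) (a : ι → ℝ)
    (hsum : ∑' k, ENNReal.ofReal (a k) ^ d ≠ ∞) :
    ∃ δ : ℕ → ℝ, (∀ j, 0 < δ j) ∧ (∀ j, δ (j + 1) ≤ δ j / 4) ∧
      ∑' k, ENNReal.ofReal (besicovitchGauge d δ (a k)) ≠ ∞ := by
  choose η hη hηsum using fun j : ℕ => exists_pos_tsum_indicator_Iio_le hd a hsum
    (ε := 2⁻¹ ^ j / 2 ^ j) (ENNReal.div_pos (by simp) (by simp))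
  obtain ⟨δ, hδ, hδ4, hδη⟩ := exists_pos_seq_le_div_four_le η hη
  set F : ℝ → ℝ≥0∞ := fun s => ENNReal.ofReal s ^ d
  have hlevel (i : ℕ) : 2 ^ i * ∑' k, (Iio (δ i)).indicator F (a k) ≤ 2⁻¹ ^ i := calc
    2 ^ i * ∑' k, (Iio (δ i)).indicator F (a k) ≤ 2 ^ i * (2⁻¹ ^ i / 2 ^ i) := by
      gcongr
      refine le_trans (ENNReal.tsum_le_tsum fun k => ?_) (hηsum i)
      exact indicator_le_indicator_of_subset (Iio_subset_Iio (hδη i)) (fun _ => zero_le) _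
    _ = 2⁻¹ ^ i := ENNReal.mul_div_cancel (by simp) (by simp)
  refine ⟨δ, hδ, hδ4,
    ne_top_of_le_ne_top (ENNReal.add_ne_top.2 ⟨hsum, ENNReal.ofNat_ne_top (n := 2)⟩) ?_⟩
  calc ∑' k, ENNReal.ofReal (besicovitchGauge d δ (a k))
      ≤ ∑' k, (F (a k) + ∑' i, 2 ^ i * (Iio (δ i)).indicator F (a k)) :=
        ENNReal.tsum_le_tsum fun k => ofReal_besicovitchGauge_le hd (hδ · |>.le) hδ4 (a k)
    _ = ∑' k, F (a k) + ∑' i, 2 ^ i * ∑' k, (Iio (δ i)).indicator F (a k) := by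
        rw [ENNReal.tsum_add, ENNReal.tsum_comm]
        simp only [ENNReal.tsum_mul_left]
    _ ≤ ∑' k, F (a k) + ∑' i : ℕ, 2⁻¹ ^ i := by gcongr with i; exact hlevel i
    _ = ∑' k, ENNReal.ofReal (a k) ^ d + 2 := by
        rw [ENNReal.tsum_geometric, ENNReal.one_sub_inv_two, inv_inv]

section Covers

variable {X : Type*} [EMetricSpace X] [MeasurableSpace X] [BorelSpace X]

lemma exists_cover_tsum_lt_of_mkMetric_eq_zero {m : ℝ≥0∞ → ℝ≥0∞} (hm : m 0 = 0) {s : Set X}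
    (hs : Measure.mkMetric m s = 0) {r ε : ℝ≥0∞} (hr : 0 < r) (hε : 0 < ε) :
    ∃ t : ℕ → Set X, s ⊆ ⋃ n, t n ∧ (∀ n, ediam (t n) ≤ r) ∧ ∑' n, m (ediam (t n)) < ε := by
  have hlt : (⨅ (t : ℕ → Set X) (_ : s ⊆ ⋃ n, t n) (_ : ∀ n, ediam (t n) ≤ r),
      ∑' n, ⨆ _ : (t n).Nonempty, m (ediam (t n))) < ε := by
    refine lt_of_le_of_lt ?_ (hs ▸ hε)
    rw [Measure.mkMetric_apply]
    exact le_iSup₂ (f := fun r (_ : 0 < r) => ⨅ (t : ℕ → Set X) (_ : s ⊆ ⋃ n, t n)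
      (_ : ∀ n, ediam (t n) ≤ r), ∑' n, ⨆ _ : (t n).Nonempty, m (ediam (t n))) r hr
  simp only [iInf_lt_iff] at hlt
  obtain ⟨t, hst, htr, hsum⟩ := hlt
  refine ⟨t, hst, htr, lt_of_le_of_lt (ENNReal.tsum_le_tsum fun n => ?_) hsum⟩
  rcases (t n).eq_empty_or_nonempty with hempty | hne
  · simp [hempty, hm]
  · exact le_iSup (fun _ : (t n).Nonempty => m (ediam (t n))) hne

lemma mkMetric_eq_zero_of_tsum_ne_top {m : ℝ≥0∞ → ℝ≥0∞} {s : Set X} (U : ℕ → ℕ → Set X)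
    {r : ℕ → ℝ≥0∞} (hr : Tendsto r atTop (𝓝 0)) (hdiam : ∀ k n, ediam (U k n) ≤ r k)
    (hcov : ∀ k, s ⊆ ⋃ n, U k n) (hsum : ∑' k, ∑' n, m (ediam (U k n)) ≠ ∞) :
    Measure.mkMetric m s = 0 :=
  le_antisymm ((Measure.mkMetric_le_liminf_tsum s r hr U (Eventually.of_forall hdiam)
    (Eventually.of_forall hcov) m).trans_eq
      (ENNReal.tendsto_atTop_zero_of_tsum_ne_top hsum).liminf_eq) zero_le

theorem exists_isDimFun_prec_gaugeMeasure_eq_zero (hd : 0 < d) {E : Set X}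
    (hE : μH[d] E = 0) :
    ∃ h, IsDimFun h ∧ Prec h (fun x => x ^ d) ∧ gaugeMeasure h E = 0 := by
  have hm : (0 : ℝ≥0∞) ^ (d : ℝ) = 0 := ENNReal.zero_rpow_of_pos (by positivity)
  choose U hcov hdiam hsum using fun k : ℕ => exists_cover_tsum_lt_of_mkMetric_eq_zero
    (m := fun r => r ^ (d : ℝ)) hm hE (r := ((k + 1 : ℕ) : ℝ≥0∞)⁻¹) (ε := 2⁻¹ ^ k)
    (ENNReal.inv_pos.2 (ENNReal.natCast_ne_top _)) (ENNReal.pow_pos (by simp) k)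
  have hofReal (p : ℕ × ℕ) : ENNReal.ofReal (ediam (U p.1 p.2)).toReal = ediam (U p.1 p.2) :=
    ENNReal.ofReal_toReal (ne_top_of_le_ne_top (ENNReal.inv_ne_top.2 (by simp)) (hdiam p.1 p.2))
  have hsum' : ∑' p : ℕ × ℕ, ENNReal.ofReal (ediam (U p.1 p.2)).toReal ^ d ≠ ∞ := by
    simp only [hofReal]
    rw [ENNReal.tsum_prod (f := fun k n => ediam (U k n) ^ d)]
    refine ne_top_of_le_ne_top (b := ∑' k : ℕ, 2⁻¹ ^ k) ?_ (ENNReal.tsum_le_tsum fun k => ?_)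
    · simp [ENNReal.tsum_geometric]
    · simpa only [ENNReal.rpow_natCast] using (hsum k).le
  obtain ⟨δ, hδ, hδ4, hgauge⟩ := exists_besicovitchGauge_tsum_ne_top hd _ hsum'
  refine ⟨besicovitchGauge d δ, isDimFun_besicovitchGauge hd (hδ · |>.le) hδ4,
    prec_besicovitchGauge hd hδ hδ4, ?_⟩
  refine mkMetric_eq_zero_of_tsum_ne_top U
    (ENNReal.tendsto_inv_nat_nhds_zero.comp (tendsto_add_atTop_nat 1)) hdiam hcov ?_
  rwa [← ENNReal.tsum_prod]

end Covers

/-- Besicovitch: positive `ℋ^h` measure for all `h ≺ x^d` implies positive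
Lebesgue measure. -/
theorem stmt_7 (d : ℕ) (hd : 0 < d) (E : Set (EuclideanSpace ℝ (Fin d)))
    (hE : ∀ h : ℝ → ℝ, IsDimFun h → Prec h (fun x : ℝ => x ^ d) →
      0 < gaugeMeasure h E) :
    0 < volume E := by
  refine pos_iff_ne_zero.2 fun hvol => ?_
  have hH : μH[d] E = 0 := Measure.absolutelyContinuous_isAddHaarMeasure _ volume hvol
  obtain ⟨h, hdim, hprec, hzero⟩ := exists_isDimFun_prec_gaugeMeasure_eq_zero hd hH
  exact (hE h hdim hprec).ne' hzero
end

section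
/- If E ⊆ ℝ has positive Lebesgue measure, then E contains arithmetic progressions of every finite length: for each n ∈ ℕ there exist a ∈ ℝ and r > 0 with a, a+r, a+2r, …, a+(n−1)r all in E. -/
open MeasureTheory Filter Set

/-!
Take a compact `K ⊆ E` of positive measure. As `g → 0`, each translate `i • g +ᵥ K` with
`i < n` differs from `K` by a set of small measure, so for small `g` the sets
`K \ (-(i • g) +ᵥ K)` have total measure less than `μ K` and cannot cover `K`; a point `a` of `K`
outside all of them starts the progression `a, g + a, …, (n - 1) • g + a` inside `K`.
-/

open scoped Pointwise Topology

theorem nonempty_inter_biInter_of_sum_measure_sdiff_lt {α ι : Type*} [MeasurableSpace α]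
    {μ : Measure α} {A : Set α} {s : Finset ι} {B : ι → Set α}
    (h : ∑ i ∈ s, μ (A \ B i) < μ A) : (A ∩ ⋂ i ∈ s, B i).Nonempty := by
  by_contra hempty
  have hcover : A ⊆ ⋃ i ∈ s, A \ B i := by
    intro x hx
    by_contra hx'
    simp only [mem_iUnion, Set.mem_sdiff, not_exists, not_and, not_not] at hx'
    exact hempty ⟨x, hx, mem_iInter₂.2 fun i hi => hx' i hi hx⟩
  exact (measure_mono hcover |>.trans (measure_biUnion_finset_le s _)).not_gt h

section AddGroup

variable {G : Type*} [MeasurableSpace G] [TopologicalSpace G] [BorelSpace G] [AddGroup G]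
  [IsTopologicalAddGroup G] [LocallyCompactSpace G]

theorem tendsto_sum_measure_nsmul_vadd_sdiff {μ : Measure G} [IsFiniteMeasureOnCompacts μ]
    [μ.InnerRegularCompactLTTop] {K : Set G} (hK : IsCompact K) (hK' : IsClosed K) (n : ℕ) :
    Tendsto (fun g : G => ∑ i ∈ Finset.range n, μ ((i • g +ᵥ K) \ K)) (𝓝 0) (𝓝 0) := by
  rw [← Finset.sum_const_zero (s := Finset.range n)]
  refine tendsto_finsetSum _ fun i _ => ?_
  have hnsmul : Tendsto (fun g : G => i • g) (𝓝 0) (𝓝 0) := by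
    simpa using (continuous_nsmul i).tendsto (0 : G)
  exact (tendsto_measure_vadd_sdiff_isCompact_isClosed hK hK').comp hnsmul

theorem eventually_nhds_zero_exists_nsmul_add_mem (μ : Measure G) [μ.IsAddHaarMeasure]
    [μ.InnerRegular] {E : Set G} (hE : MeasurableSet E) (hpos : 0 < μ E) (n : ℕ) :
    ∀ᶠ g in 𝓝 0, ∃ a, ∀ i < n, i • g + a ∈ E := by
  obtain ⟨K, hKE, hK, hKpos⟩ := hE.exists_lt_isCompact hpos
  have hcl : closure K ⊆ E := hK.closure_subset_measurableSet hE hKE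
  have hpos' : 0 < μ (closure K) := hKpos.trans_le (measure_mono subset_closure)
  filter_upwards [(tendsto_sum_measure_nsmul_vadd_sdiff hK.closure isClosed_closure n
    (μ := μ)).eventually (gt_mem_nhds hpos')] with g hg
  simp_rw [← measure_sdiff_neg_vadd μ] at hg
  obtain ⟨a, -, ha⟩ := nonempty_inter_biInter_of_sum_measure_sdiff_lt hg
  refine ⟨a, fun i hi => hcl ?_⟩
  obtain ⟨k, hk, rfl⟩ := mem_iInter₂.1 ha i (Finset.mem_range.2 hi)
  simpa using hk

end AddGroup

theorem stmt_8 (E : Set ℝ) (hE : MeasurableSet E) (hpos : 0 < volume E) :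
    ∀ n : ℕ, ∃ a r : ℝ, 0 < r ∧ ∀ i : ℕ, i < n → a + i * r ∈ E := by
  intro n
  obtain ⟨r, ⟨a, ha⟩, hr⟩ :=
    ((eventually_nhds_zero_exists_nsmul_add_mem volume hE hpos n).filter_mono
      nhdsWithin_le_nhds |>.and (self_mem_nhdsWithin (s := Ioi 0))).exists
  exact ⟨a, r, hr, fun i hi => by simpa [add_comm, nsmul_eq_mul] using ha i hi⟩
end

section
/- Given a dimension function h with h ≺ x and a countable set Ã ⊆ ℝ \ {0}, there exists a compact set Ẽ ⊆ [0, log 2] with ℋ^h(Ẽ) > 0 such that the difference set Ẽ − Ẽ = { y − x : x, y ∈ Ẽ } contains no element of Ã. -/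
open MeasureTheory Filter Set

/-!
The set is a Cantor set `⋂ₖ Cₖ` whose intervals of level `k` have length `lₖ` and left endpoints
in `4 lₖ ℕ`. Two of its points differ by an element of `4 lₖ ℤ + [-lₖ, lₖ]`, which contains no
odd multiple of `2 lₖ`; so after enumerating `A = {a₀, a₁, …}` it suffices to choose `lₖ₊₁` with
`aₖ ∈ (2ℤ + 1) · 2 lₖ₊₁`, which is possible at arbitrarily small scales.

Each interval of level `k` contains about `lₖ / 8 lₖ₊₁` intervals of level `k + 1`, so the
natural measure `μ` (the image of Lebesgue measure on `[0, 1)` under the coding map) gives mass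
`1 / Nₖ` to each interval of level `k`, where `lₖ Nₖ ≥ l₀ 16⁻ᵏ`. Since `h x / x → ∞`, taking
`lₖ₊₁` small enough forces `μ s ≤ h (diam s)` for all small sets `s`, and the mass distribution
principle gives `ℋ^h E ≥ μ E = 1`.
-/

open Topology

theorem exists_succ_lt_le {α : Type*} [LinearOrder α] {u : ℕ → α} {d : α} (h₀ : d ≤ u 0)
    (h : ∃ n, u n < d) : ∃ k, u (k + 1) < d ∧ d ≤ u k := by
  classical
  have hspec := Nat.find_spec h
  obtain ⟨k, hk⟩ : ∃ k, Nat.find h = k + 1 :=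
    Nat.exists_eq_succ_of_ne_zero fun h0 => (h0 ▸ hspec).not_ge h₀
  exact ⟨k, hk ▸ hspec, not_lt.1 (Nat.find_min h (by omega))⟩

theorem Set.Countable.exists_forall_ne_subset_range {α : Type*} [Nontrivial α] {A : Set α}
    (hA : A.Countable) {b : α} (hb : b ∉ A) : ∃ f : ℕ → α, (∀ k, f k ≠ b) ∧ A ⊆ range f := by
  obtain ⟨c, hc⟩ := exists_ne b
  obtain ⟨f, hf⟩ := (hA.insert c).exists_eq_range (insert_nonempty c A)
  refine ⟨f, fun k hk => ?_, hf ▸ subset_insert c A⟩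
  have hmem : f k ∈ insert c A := hf ▸ mem_range_self k
  rcases hk ▸ hmem with hbc | hbA
  exacts [hc hbc.symm, hb hbA]

theorem le_mul_ceil_div {c y : ℝ} (hc : 0 < c) (hy : 0 ≤ y) :
    y ≤ c * ⌈y / c⌉₊ ∧ c * ⌈y / c⌉₊ < y + c := by
  have h₁ := Nat.le_ceil (y / c)
  have h₂ := Nat.ceil_lt_add_one (div_nonneg hy hc.le)
  constructor
  · calc y = c * (y / c) := by field_simp
      _ ≤ c * ⌈y / c⌉₊ := by gcongr
  · calc c * ⌈y / c⌉₊ < c * (y / c + 1) := by gcongr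
      _ = y + c := by field_simp

theorem sub_ne_odd_mul_of_mem_Icc {l x y : ℝ} (hl : 0 < l) {m m' j : ℤ}
    (hx : x ∈ Icc (4 * l * m) (4 * l * m + l)) (hy : y ∈ Icc (4 * l * m') (4 * l * m' + l)) :
    y - x ≠ (2 * j + 1) * (2 * l) := by
  intro hxy
  have hn : (1 : ℝ) ≤ |((2 * j + 1 - 2 * (m' - m) : ℤ) : ℝ)| := by
    exact_mod_cast Int.one_le_abs (by omega)
  have key :
      (y - 4 * l * m') - (x - 4 * l * m) = 2 * l * ((2 * j + 1 - 2 * (m' - m) : ℤ) : ℝ) := by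
    push_cast; linarith
  have hbd : |(y - 4 * l * m') - (x - 4 * l * m)| ≤ l :=
    abs_le.2 ⟨by linarith [hx.2, hy.1], by linarith [hx.1, hy.2]⟩
  rw [key, abs_mul, abs_of_pos (by positivity)] at hbd
  nlinarith

theorem exists_pos_forall_mul_le_of_prec {h : ℝ → ℝ} (hpos : ∀ t > 0, 0 < h t)
    (hprec : Prec h fun x => x) {C : ℝ} (hC : 0 < C) : ∃ t > 0, ∀ x ∈ Ioc 0 t, C * x ≤ h x := by
  obtain ⟨t, ht, hsub⟩ :=
    mem_nhdsGT_iff_exists_Ioc_subset.1 (hprec.eventually_lt_const (inv_pos.2 hC))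
  refine ⟨t, ht, fun x hx => ?_⟩
  have hlt : x / h x < C⁻¹ := hsub hx
  rw [div_lt_iff₀ (hpos x hx.1)] at hlt
  calc C * x ≤ C * (C⁻¹ * h x) := by gcongr
    _ = h x := by field_simp

theorem le_gaugeMeasure {X : Type*} [EMetricSpace X] [MeasurableSpace X] [BorelSpace X]
    {μ : Measure X} {h : ℝ → ℝ} (hcont : ContinuousWithinAt h (Ici 0) 0) {r : ℝ} (hr : 0 < r)
    (H : ∀ s : Set X, ∀ d, 0 < d → d ≤ r → Metric.ediam s ≤ ENNReal.ofReal d →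
      μ s ≤ ENNReal.ofReal (h d)) :
    μ ≤ gaugeMeasure h := by
  refine Measure.le_mkMetric _ μ (ENNReal.ofReal r) (by positivity) fun s hs => ?_
  have hfin : Metric.ediam s ≠ ⊤ := ne_top_of_le_ne_top ENNReal.ofReal_ne_top hs
  rcases ENNReal.toReal_nonneg.eq_or_lt with hD | hD
  · -- a set of diameter zero is covered at every positive scale, and `h` is right-continuous at 0
    rw [← hD]
    have hlim : Tendsto (fun d => ENNReal.ofReal (h d)) (𝓝[>] 0) (𝓝 (ENNReal.ofReal (h 0))) :=
      (ENNReal.continuous_ofReal.tendsto _).comp (hcont.mono Ioi_subset_Ici_self)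
    refine ge_of_tendsto hlim ?_
    filter_upwards [Ioc_mem_nhdsGT hr] with d hd
    refine H s d hd.1 hd.2 ?_
    rw [← ENNReal.ofReal_toReal hfin, ← hD]
    exact ENNReal.ofReal_le_ofReal hd.1.le
  · exact H s _ hD (ENNReal.toReal_le_of_le_ofReal hr.le hs) (ENNReal.ofReal_toReal hfin).ge

noncomputable def oddScale (a ε : ℝ) : ℝ := |a| / (2 * (2 * ⌈|a| / ε⌉₊ + 1))

theorem oddScale_pos {a : ℝ} (ha : a ≠ 0) (ε : ℝ) : 0 < oddScale a ε := by
  unfold oddScale; positivity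

theorem oddScale_le (a : ℝ) {ε : ℝ} (hε : 0 < ε) : oddScale a ε ≤ ε := by
  have h := Nat.le_ceil (|a| / ε)
  rw [div_le_iff₀ hε] at h
  rw [oddScale, div_le_iff₀ (by positivity)]
  nlinarith

theorem exists_eq_odd_mul_oddScale (a ε : ℝ) : ∃ j : ℤ, a = (2 * j + 1) * (2 * oddScale a ε) := by
  have hden : (2 * (2 * ⌈|a| / ε⌉₊ + 1) : ℝ) ≠ 0 := by positivity
  rcases abs_choice a with ha | ha
  · exact ⟨⌈|a| / ε⌉₊, by rw [oddScale, ha]; field_simp; push_cast; ring⟩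
  · exact ⟨-⌈|a| / ε⌉₊ - 1, by rw [oddScale, ha]; field_simp; push_cast; ring⟩

noncomputable def oddScaleSeq (L : ℝ) (a T : ℕ → ℝ) : ℕ → ℝ
  | 0 => L
  | k + 1 => oddScale (a k) (min (oddScaleSeq L a T k / 16) (T k))

structure CantorScales where
  len : ℕ → ℝ
  len_pos : ∀ k, 0 < len k
  sixteen_mul_len_succ_le : ∀ k, 16 * len (k + 1) ≤ len k

namespace CantorScales

variable (S : CantorScales)

noncomputable def branch (k : ℕ) : ℕ := ⌊S.len k / (8 * S.len (k + 1))⌋₊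

noncomputable def count : ℕ → ℕ
  | 0 => 1
  | k + 1 => count k * S.branch k

/- The children of the `i`-th interval of level `k` are the intervals `branch k * i + r`,
`r < branch k`, of level `k + 1`; they occupy consecutive cells of the grid `4 lₖ₊₁ ℕ`, starting at
the first one not to the left of their parent. -/
noncomputable def slot : ℕ → ℕ → ℕ
  | 0, i => i
  | k + 1, i =>
    ⌈4 * S.len k * slot k (i / S.branch k) / (4 * S.len (k + 1))⌉₊ + i % S.branch k

noncomputable def left (k i : ℕ) : ℝ := 4 * S.len k * S.slot k i

noncomputable def level (k : ℕ) : Set ℝ :=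
  ⋃ i ∈ Finset.range (S.count k), Icc (S.left k i) (S.left k i + S.len k)

noncomputable def cantor : Set ℝ := ⋂ k, S.level k

theorem isClosed_cantor : IsClosed S.cantor :=
  isClosed_iInter fun _ => isClosed_biUnion_finset fun _ _ => isClosed_Icc

theorem cantor_subset_Icc : S.cantor ⊆ Icc 0 (S.len 0) := fun x hx => by
  simpa [level, count, left, slot] using mem_iInter.1 hx 0

theorem isCompact_cantor : IsCompact S.cantor :=
  isCompact_Icc.of_isClosed_subset S.isClosed_cantor S.cantor_subset_Icc

theorem sub_ne_odd_mul_len {x y : ℝ} (hx : x ∈ S.cantor) (hy : y ∈ S.cantor) (k : ℕ) (j : ℤ) :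
    y - x ≠ (2 * j + 1) * (2 * S.len k) := by
  obtain ⟨i, -, hi⟩ := mem_iUnion₂.1 (mem_iInter.1 hx k)
  obtain ⟨i', -, hi'⟩ := mem_iUnion₂.1 (mem_iInter.1 hy k)
  refine sub_ne_odd_mul_of_mem_Icc (S.len_pos k) (m := S.slot k i) (m' := S.slot k i') ?_ ?_
  · simpa [left] using hi
  · simpa [left] using hi'

theorem two_le_branch (k : ℕ) : 2 ≤ S.branch k := by
  have h := S.len_pos (k + 1)
  refine Nat.le_floor ?_
  rw [le_div_iff₀ (by positivity)]
  push_cast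
  linarith [S.sixteen_mul_len_succ_le k]

theorem branch_pos (k : ℕ) : 0 < S.branch k := by
  linarith [S.two_le_branch k]

theorem four_mul_branch_add_one_mul_le (k : ℕ) :
    (4 * S.branch k + 1) * S.len (k + 1) ≤ S.len k := by
  have h := S.len_pos (k + 1)
  have hM : (S.branch k : ℝ) * (8 * S.len (k + 1)) ≤ S.len k :=
    (le_div_iff₀ (by positivity)).1 (Nat.floor_le (by positivity [S.len_pos k]))
  linarith [S.sixteen_mul_len_succ_le k]

theorem len_le_sixteen_mul_branch (k : ℕ) :
    S.len k ≤ 16 * S.len (k + 1) * S.branch k := by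
  have h := S.len_pos (k + 1)
  have hM : S.len k / (8 * S.len (k + 1)) < S.branch k + 1 := Nat.lt_floor_add_one _
  rw [div_lt_iff₀ (by positivity)] at hM
  linarith [S.sixteen_mul_len_succ_le k]

theorem len_succ_lt (k : ℕ) : S.len (k + 1) < S.len k := by
  linarith [S.sixteen_mul_len_succ_le k, S.len_pos (k + 1)]

theorem count_pos (k : ℕ) : 0 < S.count k := by
  induction k with
  | zero => exact Nat.one_pos
  | succ k ih => exact Nat.mul_pos ih (S.branch_pos k)

theorem sixteen_pow_mul_len_le (k : ℕ) : 16 ^ k * S.len k ≤ S.len 0 := by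
  induction k with
  | zero => simp
  | succ k ih =>
    calc 16 ^ (k + 1) * S.len (k + 1) = 16 ^ k * (16 * S.len (k + 1)) := by ring
      _ ≤ 16 ^ k * S.len k := by gcongr; exact S.sixteen_mul_len_succ_le k
      _ ≤ S.len 0 := ih

theorem len_zero_le_mass (k : ℕ) : S.len 0 ≤ 16 ^ k * (S.len k * S.count k) := by
  induction k with
  | zero => simp [count]
  | succ k ih =>
    have h := mul_le_mul_of_nonneg_left (S.len_le_sixteen_mul_branch k)
      (by positivity : (0 : ℝ) ≤ 16 ^ k * S.count k)
    calc S.len 0 ≤ 16 ^ k * (S.len k * S.count k) := ih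
      _ ≤ _ := by simp only [count, Nat.cast_mul, pow_succ]; linarith

theorem exists_len_lt {d : ℝ} (hd : 0 < d) : ∃ k, S.len k < d := by
  obtain ⟨k, hk⟩ :=
    exists_pow_lt_of_lt_one (div_pos hd (S.len_pos 0)) (by norm_num : (1 : ℝ) / 16 < 1)
  refine ⟨k, ?_⟩
  have h := S.sixteen_pow_mul_len_le k
  rw [lt_div_iff₀ (S.len_pos 0), div_pow, one_pow] at hk
  have h16 : (0 : ℝ) < 16 ^ k := by positivity
  calc S.len k = 1 / 16 ^ k * (16 ^ k * S.len k) := by field_simp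
    _ ≤ 1 / 16 ^ k * S.len 0 := by gcongr
    _ < d := by linarith

theorem left_succ (k i : ℕ) :
    S.left (k + 1) i =
      4 * S.len (k + 1) * ⌈S.left k (i / S.branch k) / (4 * S.len (k + 1))⌉₊ +
        4 * S.len (k + 1) * (i % S.branch k : ℕ) := by
  simp only [left, slot, Nat.cast_add]
  ring

theorem left_nonneg (k i : ℕ) : 0 ≤ S.left k i := by
  have := S.len_pos k
  unfold left; positivity

theorem left_succ_le (k i : ℕ) :
    S.left k (i / S.branch k) ≤ S.left (k + 1) i ∧
      S.left (k + 1) i + S.len (k + 1) ≤ S.left k (i / S.branch k) + S.len k := by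
  have hl := S.len_pos (k + 1)
  have hceil :=
    le_mul_ceil_div (by positivity : 0 < 4 * S.len (k + 1)) (S.left_nonneg k (i / S.branch k))
  have hr : (i % S.branch k : ℕ) + 1 ≤ (S.branch k : ℝ) := by
    exact_mod_cast Nat.mod_lt i (S.branch_pos k)
  have hfit := S.four_mul_branch_add_one_mul_le k
  rw [left_succ]
  constructor
  · nlinarith
  · nlinarith

theorem left_add_le_left_succ (k i : ℕ) : S.left k i + 4 * S.len k ≤ S.left k (i + 1) := by
  induction k generalizing i with
  | zero => simp only [left, slot]; push_cast; linarith
  | succ k ih =>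
    set M := S.branch k
    have hl := S.len_pos (k + 1)
    obtain ⟨q, r, hr, rfl⟩ : ∃ q r, r < M ∧ i = M * q + r :=
      ⟨i / M, i % M, Nat.mod_lt _ (S.branch_pos k), (Nat.div_add_mod i M).symm⟩
    have hdiv (r : ℕ) (hr : r < M) : (M * q + r) / M = q := by
      rw [Nat.mul_add_div (S.branch_pos k), Nat.div_eq_of_lt hr, add_zero]
    rcases Nat.lt_or_ge (r + 1) M with hr1 | hr1
    · rw [add_assoc, left_succ, left_succ, hdiv r hr, hdiv _ hr1, Nat.mul_add_mod,
        Nat.mul_add_mod, Nat.mod_eq_of_lt hr, Nat.mod_eq_of_lt hr1]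
      push_cast; linarith
    · have hq := (S.left_succ_le k (M * q + r)).2
      have hq1 := (S.left_succ_le k (M * (q + 1))).1
      rw [hdiv r hr] at hq
      rw [show M * q + r + 1 = M * (q + 1) by rw [mul_add]; omega]
      rw [Nat.mul_div_cancel_left _ (S.branch_pos k)] at hq1
      linarith [ih q, S.len_le_sixteen_mul_branch k, S.sixteen_mul_len_succ_le k]

theorem mul_abs_sub_le_abs_left_sub (k i j : ℕ) :
    4 * S.len k * |(i : ℝ) - j| ≤ |S.left k i - S.left k j| := by
  have hmono : Monotone fun i : ℕ => S.left k i - 4 * S.len k * i :=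
    monotone_nat_of_le_succ fun i => by
      have := S.left_add_le_left_succ k i
      push_cast; linarith
  wlog hij : i ≤ j generalizing i j
  · rw [abs_sub_comm, abs_sub_comm (S.left k i)]
    exact this j i (le_of_not_ge hij)
  have h := hmono hij
  have hij' : (i : ℝ) ≤ j := by exact_mod_cast hij
  simp only at h
  rw [abs_of_nonpos (by linarith), abs_of_nonpos (by nlinarith [S.len_pos k])]
  linarith

noncomputable def code (k : ℕ) (ω : ℝ) : ℕ := ⌊ω * S.count k⌋₊

noncomputable def coding (ω : ℝ) : ℝ := ⨆ k, S.left k (S.code k ω)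

theorem code_succ_div (k : ℕ) (ω : ℝ) : S.code (k + 1) ω / S.branch k = S.code k ω := by
  rw [code, code, ← Nat.floor_div_natCast, count, Nat.cast_mul, ← mul_assoc,
    mul_div_cancel_right₀ _ (by exact_mod_cast (S.branch_pos k).ne')]

theorem coding_mem_Icc (k : ℕ) (ω : ℝ) :
    S.coding ω ∈ Icc (S.left k (S.code k ω)) (S.left k (S.code k ω) + S.len k) := by
  have hnest (k : ℕ) := S.code_succ_div k ω ▸ S.left_succ_le k (S.code (k + 1) ω)
  refine mem_iInter.1 (Monotone.ciSup_mem_iInter_Icc_of_antitone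
    (g := fun k => S.left k (S.code k ω) + S.len k)
    (monotone_nat_of_le_succ fun k => (hnest k).1)
    (antitone_nat_of_succ_le fun k => (hnest k).2) fun k => ?_) k
  simp only [le_add_iff_nonneg_right, (S.len_pos k).le]

theorem measurable_coding : Measurable S.coding :=
  Measurable.iSup fun k => (measurable_from_nat (f := S.left k)).comp
    (Nat.measurable_floor.comp (measurable_id.mul_const _))

theorem code_lt_count {k : ℕ} {ω : ℝ} (hω : ω ∈ Ico 0 1) : S.code k ω < S.count k := by
  have hN : (0 : ℝ) < S.count k := by exact_mod_cast S.count_pos k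
  rw [code, Nat.floor_lt (by positivity [hω.1])]
  nlinarith [hω.2]

theorem coding_mem_cantor {ω : ℝ} (hω : ω ∈ Ico 0 1) : S.coding ω ∈ S.cantor :=
  mem_iInter.2 fun k =>
    mem_biUnion (Finset.mem_coe.2 (Finset.mem_range.2 (S.code_lt_count hω))) (S.coding_mem_Icc k ω)

theorem abs_sub_le_of_abs_coding_sub_le (k : ℕ) {ω ω' d : ℝ} (hω : 0 ≤ ω) (hω' : 0 ≤ ω')
    (hd : |S.coding ω - S.coding ω'| ≤ d) :
    |ω - ω'| ≤ (d + 5 * S.len k) / (4 * S.len k * S.count k) := by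
  have hl := S.len_pos k
  have hN : (0 : ℝ) < S.count k := by exact_mod_cast S.count_pos k
  set c := S.code k ω
  set c' := S.code k ω'
  have hleft : |S.left k c - S.left k c'| ≤ d + S.len k := by
    have h := S.coding_mem_Icc k ω
    have h' := S.coding_mem_Icc k ω'
    rw [abs_le] at hd ⊢
    constructor <;> linarith [h.1, h.2, h'.1, h'.2]
  have hcode : 4 * S.len k * |(c : ℝ) - c'| ≤ d + S.len k :=
    (S.mul_abs_sub_le_abs_left_sub k c c').trans hleft
  have hfloor : |ω * S.count k - ω' * S.count k| ≤ |(c : ℝ) - c'| + 1 := by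
    have h₁ : (c : ℝ) ≤ ω * S.count k := Nat.floor_le (mul_nonneg hω hN.le)
    have h₂ : ω * S.count k < c + 1 := Nat.lt_floor_add_one _
    have h₃ : (c' : ℝ) ≤ ω' * S.count k := Nat.floor_le (mul_nonneg hω' hN.le)
    have h₄ : ω' * S.count k < c' + 1 := Nat.lt_floor_add_one _
    rw [abs_le]
    constructor <;> linarith [le_abs_self ((c : ℝ) - c'), neg_abs_le ((c : ℝ) - c')]
  rw [← sub_mul, abs_mul, abs_of_pos hN] at hfloor
  rw [le_div_iff₀ (by positivity)]
  nlinarith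

noncomputable def measure : Measure ℝ := (volume.restrict (Ico 0 1)).map S.coding

theorem measure_cantor : S.measure S.cantor = 1 := by
  rw [measure, Measure.map_apply S.measurable_coding S.isClosed_cantor.measurableSet,
    Measure.restrict_apply_superset (t := S.coding ⁻¹' S.cantor) fun _ => S.coding_mem_cantor,
    Real.volume_Ico]
  norm_num

theorem measure_le (k : ℕ) {s : Set ℝ} {d : ℝ} (hd : 0 ≤ d)
    (hs : Metric.ediam s ≤ ENNReal.ofReal d) :
    S.measure s ≤ ENNReal.ofReal ((d + 5 * S.len k) / (4 * S.len k * S.count k)) := by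
  have hmeas : MeasurableSet (closure s) := isClosed_closure.measurableSet
  calc S.measure s ≤ S.measure (closure s) := measure_mono subset_closure
    _ = volume (S.coding ⁻¹' closure s ∩ Ico 0 1) := by
      rw [measure, Measure.map_apply S.measurable_coding hmeas,
        Measure.restrict_apply (S.measurable_coding hmeas)]
    _ ≤ Metric.ediam (S.coding ⁻¹' closure s ∩ Ico 0 1) := Real.volume_le_diam _
    _ ≤ _ := Metric.ediam_le fun ω hω ω' hω' => by
      have hdist := (Metric.edist_le_ediam_of_mem (s := closure s) hω.1 hω'.1).trans
        ((Metric.ediam_closure s).trans_le hs)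
      rw [edist_le_ofReal hd, Real.dist_eq] at hdist
      rw [edist_dist, Real.dist_eq]
      exact ENNReal.ofReal_le_ofReal (S.abs_sub_le_of_abs_coding_sub_le k hω.2.1 hω'.2.1 hdist)

theorem measure_le_of_forall_mul_le {h : ℝ → ℝ}
    (hh : ∀ k, ∀ x ∈ Ioc 0 (S.len (k + 1)), 2 * 16 ^ (k + 2) / S.len 0 * x ≤ h x)
    {s : Set ℝ} {d : ℝ} (hd : 0 < d) (hd₁ : d ≤ S.len 1)
    (hs : Metric.ediam s ≤ ENNReal.ofReal d) :
    S.measure s ≤ ENNReal.ofReal (h d) := by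
  obtain ⟨n, hn⟩ := S.exists_len_lt hd
  obtain ⟨k, hk₂, hk₁⟩ := exists_succ_lt_le (u := fun k => S.len (k + 1)) hd₁
    ⟨n, (S.len_succ_lt n).trans hn⟩
  -- `s` is longer than the intervals of level `k + 2`, so it meets `O(d / len (k + 2))` of them
  refine (S.measure_le (k + 2) hd.le hs).trans (ENNReal.ofReal_le_ofReal ?_)
  have hl := S.len_pos (k + 2)
  have hN : (0 : ℝ) < S.count (k + 2) := by exact_mod_cast S.count_pos (k + 2)
  have hmass := S.len_zero_le_mass (k + 2)
  have hL := S.len_pos 0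
  calc (d + 5 * S.len (k + 2)) / (4 * S.len (k + 2) * S.count (k + 2))
      ≤ 2 * d / (S.len (k + 2) * S.count (k + 2)) := by
        rw [div_le_div_iff₀ (by positivity) (by positivity)]
        nlinarith [mul_pos hl hN]
    _ ≤ 2 * 16 ^ (k + 2) / S.len 0 * d := by
        rw [div_mul_eq_mul_div, div_le_div_iff₀ (by positivity) hL]
        nlinarith
    _ ≤ h d := hh k d ⟨hd, hk₁⟩

end CantorScales

theorem exists_cantorScales {L : ℝ} (hL : 0 < L) {a : ℕ → ℝ} (ha : ∀ k, a k ≠ 0) {T : ℕ → ℝ}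
    (hT : ∀ k, 0 < T k) :
    ∃ S : CantorScales, S.len 0 = L ∧
      ∀ k, S.len (k + 1) ≤ T k ∧ ∃ j : ℤ, a k = (2 * j + 1) * (2 * S.len (k + 1)) := by
  have hpos : ∀ k, 0 < oddScaleSeq L a T k
    | 0 => hL
    | k + 1 => oddScale_pos (ha k) _
  have hle (k : ℕ) : oddScaleSeq L a T (k + 1) ≤ min (oddScaleSeq L a T k / 16) (T k) :=
    oddScale_le (a k) (lt_min (div_pos (hpos k) (by norm_num : (0 : ℝ) < 16)) (hT k))
  refine ⟨⟨oddScaleSeq L a T, hpos, fun k => ?_⟩, rfl, fun k =>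
    ⟨(hle k).trans (min_le_right _ _), exists_eq_odd_mul_oddScale _ _⟩⟩
  linarith [(hle k).trans (min_le_left _ _)]

theorem stmt_10 (h : ℝ → ℝ) (hdim : IsDimFun h) (hprec : Prec h (fun x : ℝ => x))
    (A : Set ℝ) (hA : A.Countable) (hA0 : (0 : ℝ) ∉ A) :
    ∃ E : Set ℝ, E ⊆ Set.Icc 0 (Real.log 2) ∧ IsCompact E ∧ 0 < gaugeMeasure h E ∧
      ∀ a ∈ A, ∀ x ∈ E, ∀ y ∈ E, y - x ≠ a := by
  obtain ⟨-, hpos, -, hcont⟩ := hdim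
  obtain ⟨a, ha, hAa⟩ := hA.exists_forall_ne_subset_range hA0
  have hlog := Real.log_pos one_lt_two
  choose T hT hTh using fun k : ℕ =>
    exists_pos_forall_mul_le_of_prec hpos hprec
      (by positivity : 0 < 2 * 16 ^ (k + 2) / Real.log 2)
  obtain ⟨S, hS₀, hS⟩ := exists_cantorScales hlog ha hT
  refine ⟨S.cantor, hS₀ ▸ S.cantor_subset_Icc, S.isCompact_cantor, ?_, ?_⟩
  · have hle : S.measure ≤ gaugeMeasure h :=
      le_gaugeMeasure (hcont 0 self_mem_Ici) (S.len_pos 1) fun s d hd hd₁ hs =>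
        S.measure_le_of_forall_mul_le (fun k x hx => hS₀ ▸ hTh k x ⟨hx.1, hx.2.trans (hS k).1⟩)
          hd hd₁ hs
    calc (0 : ENNReal) < 1 := one_pos
      _ = S.measure S.cantor := S.measure_cantor.symm
      _ ≤ gaugeMeasure h S.cantor := hle _
  · rintro _ hb x hx y hy
    obtain ⟨k, rfl⟩ := hAa hb
    obtain ⟨j, hj⟩ := (hS k).2
    exact hj ▸ S.sub_ne_odd_mul_len hx hy (k + 1) j
end

section
/- Given a dimension function h with h ≺ x, there exists a compact set Ẽ ⊆ ℝ with ℋ^h(Ẽ) > 0 whose difference set Ẽ − Ẽ has empty interior. -/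
/-!
`E` is a Cantor set with rapidly shrinking scales `s_k`: each interval of level `k` (of length
`s_k / 8`) contains `M_k ≈ s_k / (16 s_{k+1})` intervals of level `k + 1`, at spacing `s_{k+1}`,
so the number `N_k = M_0 ⋯ M_{k-1}` of level-`k` intervals satisfies `N_k s_k ≤ s_0 / 16^k`.
Digit differences lie in `(-M_j, M_j)`, so the differences of left endpoints of level `k` take at
most `2^k N_k` values and `E - E` is covered by intervals of total length `O(8^{-k})`: it is
Lebesgue null, hence has empty interior. On the other hand, the image `μ` of Lebesgue measure on
`[0, 1)` under the map reading off base-`(M_k)` digits gives an interval of length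
`d ∈ [s_{k+1}, s_k]` mass `≲ 32^k d / s_0`. Choosing `s_k` so small that `32^k x ≤ h x` for
`x ≤ s_k`, possible since `x / h x → 0`, the mass distribution principle gives `ℋ^h(E) ≳ s_0`.
-/

open MeasureTheory Filter Set

lemma subset_Icc_sInf_add_diam {t : Set ℝ} (ht : Bornology.IsBounded t) :
    t ⊆ Icc (sInf t) (sInf t + Metric.diam t) := by
  rw [Real.diam_eq ht, add_sub_cancel]
  exact ht.subset_Icc_sInf_sSup

namespace FastCantor

variable (D : ℕ → ℝ)

noncomputable def scale : ℕ → ℝ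
  | 0 => D 0
  | k + 1 => min (scale k / 32) (D (k + 1))

noncomputable def branching (k : ℕ) : ℕ := ⌊scale D k / (16 * scale D (k + 1))⌋₊

noncomputable def numCyl (k : ℕ) : ℕ := ∏ j ∈ Finset.range k, branching D j

variable {D}

lemma scale_pos (hD : ∀ k, 0 < D k) : ∀ k, 0 < scale D k
  | 0 => hD 0
  | k + 1 => lt_min (by have := scale_pos hD k; positivity) (hD (k + 1))

lemma scale_succ_le (k : ℕ) : scale D (k + 1) ≤ scale D k / 32 := min_le_left _ _

lemma scale_le : ∀ k, scale D k ≤ D k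
  | 0 => le_rfl
  | _ + 1 => min_le_right _ _

lemma scale_add_le (k j : ℕ) : scale D (k + j) ≤ scale D k / 32 ^ j := by
  induction j with
  | zero => simp
  | succ j ih =>
    calc scale D (k + j + 1) ≤ scale D (k + j) / 32 := scale_succ_le _
      _ ≤ scale D k / 32 ^ j / 32 := by gcongr
      _ = scale D k / 32 ^ (j + 1) := by ring

lemma tendsto_scale_atTop (hD : ∀ k, 0 < D k) : Tendsto (scale D) atTop (nhds 0) := by
  have hgeom := (tendsto_pow_atTop_nhds_zero_of_lt_one (by norm_num)
    (by norm_num : (1 / 32 : ℝ) < 1)).const_mul (scale D 0)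
  rw [mul_zero] at hgeom
  refine squeeze_zero (fun k => (scale_pos hD k).le) (fun k => ?_) hgeom
  simpa [div_eq_mul_inv] using scale_add_le 0 k

lemma two_le_scale_div (hD : ∀ k, 0 < D k) (k : ℕ) :
    2 ≤ scale D k / (16 * scale D (k + 1)) := by
  have := scale_pos hD (k + 1)
  rw [le_div_iff₀ (by positivity)]
  linarith [scale_succ_le (D := D) k]

lemma two_le_branching (hD : ∀ k, 0 < D k) (k : ℕ) : 2 ≤ branching D k :=
  Nat.le_floor (by exact_mod_cast two_le_scale_div hD k)

lemma branching_pos (hD : ∀ k, 0 < D k) (k : ℕ) : 0 < branching D k :=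
  zero_lt_two.trans_le (two_le_branching hD k)

lemma branching_mul_scale_le (hD : ∀ k, 0 < D k) (k : ℕ) :
    branching D k * scale D (k + 1) ≤ scale D k / 16 := by
  have := scale_pos hD (k + 1)
  calc (branching D k : ℝ) * scale D (k + 1)
      ≤ scale D k / (16 * scale D (k + 1)) * scale D (k + 1) := by
        gcongr; exact Nat.floor_le (by linarith [two_le_scale_div hD k])
    _ = scale D k / 16 := by field_simp

lemma le_branching_mul_scale (hD : ∀ k, 0 < D k) (k : ℕ) :
    scale D k / 32 ≤ branching D k * scale D (k + 1) := by
  have := scale_pos hD (k + 1)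
  set r := scale D k / (16 * scale D (k + 1))
  have hr : r / 2 ≤ branching D k := by
    have : (branching D k : ℝ) = ⌊r⌋₊ := rfl
    linarith [Nat.lt_floor_add_one r, two_le_scale_div hD k]
  calc scale D k / 32 = r / 2 * scale D (k + 1) := by simp only [r]; field_simp; ring
    _ ≤ branching D k * scale D (k + 1) := by gcongr

@[simp] lemma numCyl_zero : numCyl D 0 = 1 := rfl

lemma numCyl_succ (k : ℕ) : numCyl D (k + 1) = numCyl D k * branching D k :=
  Finset.prod_range_succ _ _

lemma numCyl_pos (hD : ∀ k, 0 < D k) (k : ℕ) : 0 < numCyl D k :=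
  Finset.prod_pos fun j _ => branching_pos hD j

lemma two_pow_le_numCyl (hD : ∀ k, 0 < D k) (k : ℕ) : 2 ^ k ≤ numCyl D k := by
  simpa [numCyl] using
    Finset.prod_le_prod' (s := Finset.range k) fun j _ => two_le_branching hD j

lemma scale_zero_div_le_numCyl_mul_scale (hD : ∀ k, 0 < D k) (k : ℕ) :
    scale D 0 / 32 ^ k ≤ numCyl D k * scale D k := by
  induction k with
  | zero => simp
  | succ k ih =>
    calc scale D 0 / 32 ^ (k + 1) = scale D 0 / 32 ^ k / 32 := by ring
      _ ≤ numCyl D k * (scale D k / 32) := by rw [mul_div_assoc']; gcongr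
      _ ≤ numCyl D k * (branching D k * scale D (k + 1)) := by
        gcongr; exact le_branching_mul_scale hD k
      _ = numCyl D (k + 1) * scale D (k + 1) := by rw [numCyl_succ]; push_cast; ring

lemma numCyl_mul_scale_le (hD : ∀ k, 0 < D k) (k : ℕ) :
    numCyl D k * scale D k ≤ scale D 0 / 16 ^ k := by
  induction k with
  | zero => simp
  | succ k ih =>
    calc (numCyl D (k + 1) : ℝ) * scale D (k + 1)
        = numCyl D k * (branching D k * scale D (k + 1)) := by rw [numCyl_succ]; push_cast; ring
      _ ≤ numCyl D k * (scale D k / 16) := by gcongr; exact branching_mul_scale_le hD k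
      _ ≤ scale D 0 / 16 ^ k / 16 := by rw [mul_div_assoc']; gcongr
      _ = scale D 0 / 16 ^ (k + 1) := by ring

variable (D)

/-- The left endpoint of the `i`-th interval of level `k`, where `i` is read in the mixed radix
`(branching D 0, …, branching D (k - 1))` with its last digit least significant. -/
noncomputable def cylLeft : ℕ → ℕ → ℝ
  | 0, _ => 0
  | k + 1, i => cylLeft k (i / branching D k) + scale D (k + 1) * (i % branching D k : ℕ)

/-- The `j`-th mixed-radix digit of `x ∈ [0, 1)`. -/
noncomputable def digit (j : ℕ) (x : ℝ) : ℕ := ⌊x * numCyl D (j + 1)⌋₊ % branching D j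

noncomputable def cantorMap (x : ℝ) : ℝ := ∑' j, scale D (j + 1) * digit D j x

variable {D}

lemma scale_mul_digit_nonneg (hD : ∀ k, 0 < D k) (j : ℕ) (x : ℝ) :
    0 ≤ scale D (j + 1) * digit D j x := by
  have := scale_pos hD (j + 1); positivity

lemma scale_succ_mul_le (hD : ∀ k, 0 < D k) (k : ℕ) {r : ℕ} (hr : r ≤ branching D k) :
    scale D (k + 1) * r ≤ scale D k / 16 := by
  have := scale_pos hD (k + 1)
  calc scale D (k + 1) * r ≤ branching D k * scale D (k + 1) := by rw [mul_comm]; gcongr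
    _ ≤ scale D k / 16 := branching_mul_scale_le hD k

lemma scale_mul_digit_le (hD : ∀ k, 0 < D k) (j : ℕ) (x : ℝ) :
    scale D (j + 1) * digit D j x ≤ scale D j / 16 :=
  scale_succ_mul_le hD j (Nat.mod_lt _ (branching_pos hD j)).le

lemma scale_mul_digit_add_le (hD : ∀ k, 0 < D k) (k j : ℕ) (x : ℝ) :
    scale D (j + k + 1) * digit D (j + k) x ≤ scale D k / 16 * (1 / 32) ^ j := by
  calc scale D (j + k + 1) * digit D (j + k) x ≤ scale D (k + j) / 16 := by
        rw [add_comm k j]; exact scale_mul_digit_le hD _ x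
    _ ≤ scale D k / 32 ^ j / 16 := by gcongr; exact scale_add_le k j
    _ = scale D k / 16 * (1 / 32) ^ j := by rw [one_div_pow]; ring

lemma summable_scale_mul_digit (hD : ∀ k, 0 < D k) (x : ℝ) :
    Summable fun j => scale D (j + 1) * digit D j x :=
  .of_nonneg_of_le (scale_mul_digit_nonneg hD · x) (scale_mul_digit_add_le hD 0 · x)
    ((summable_geometric_of_lt_one (by norm_num) (by norm_num : (1 / 32 : ℝ) < 1)).mul_left _)

lemma tsum_scale_mul_digit_add_le (hD : ∀ k, 0 < D k) (k : ℕ) (x : ℝ) :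
    ∑' j, scale D (j + k + 1) * digit D (j + k) x ≤ scale D k / 8 := by
  have := scale_pos hD k
  calc ∑' j, scale D (j + k + 1) * digit D (j + k) x
      ≤ ∑' j : ℕ, scale D k / 16 * (1 / 32) ^ j :=
        Summable.tsum_le_tsum (scale_mul_digit_add_le hD k · x)
          ((summable_nat_add_iff k).2 (summable_scale_mul_digit hD x))
          ((summable_geometric_of_lt_one (by norm_num) (by norm_num)).mul_left _)
    _ = scale D k / 16 * (32 / 31) := by
        rw [tsum_mul_left, tsum_geometric_of_lt_one (by norm_num) (by norm_num)]; norm_num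
    _ ≤ scale D k / 8 := by linarith

lemma sum_range_scale_mul_digit (hD : ∀ k, 0 < D k) (k : ℕ) (x : ℝ) :
    ∑ j ∈ Finset.range k, scale D (j + 1) * digit D j x =
      cylLeft D k ⌊x * numCyl D k⌋₊ := by
  induction k with
  | zero => simp [cylLeft]
  | succ k ih =>
    have hfloor : ⌊x * numCyl D (k + 1)⌋₊ / branching D k = ⌊x * numCyl D k⌋₊ := by
      have hM : (0 : ℝ) < branching D k := by exact_mod_cast branching_pos hD k
      rw [← Nat.floor_div_natCast, numCyl_succ, Nat.cast_mul, ← mul_assoc,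
        mul_div_cancel_right₀ _ hM.ne']
    rw [Finset.sum_range_succ, ih, cylLeft, hfloor, digit]

lemma cantorMap_mem_Icc (hD : ∀ k, 0 < D k) (k : ℕ) (x : ℝ) :
    cantorMap D x ∈ Icc (cylLeft D k ⌊x * numCyl D k⌋₊)
      (cylLeft D k ⌊x * numCyl D k⌋₊ + scale D k / 8) := by
  have hsplit : cantorMap D x = cylLeft D k ⌊x * numCyl D k⌋₊ +
      ∑' j, scale D (j + k + 1) * digit D (j + k) x := by
    rw [cantorMap, ← (summable_scale_mul_digit hD x).sum_add_tsum_nat_add k,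
      sum_range_scale_mul_digit hD k x]
  rw [hsplit]
  exact ⟨le_add_of_nonneg_right (tsum_nonneg fun j => scale_mul_digit_nonneg hD (j + k) x),
    by gcongr; exact tsum_scale_mul_digit_add_le hD k x⟩

lemma measurable_cantorMap (hD : ∀ k, 0 < D k) : Measurable (cantorMap D) := by
  have hterm (j : ℕ) : Measurable fun x => scale D (j + 1) * digit D j x :=
    ((measurable_from_top (f := fun n : ℕ => ((n % branching D j : ℕ) : ℝ))).comp
      (measurable_id.mul_const _).nat_floor).const_mul _
  exact measurable_of_tendsto_metrizable (fun n => Finset.measurable_sum _ fun j _ => hterm j)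
    (tendsto_pi_nhds.2 fun x => (summable_scale_mul_digit hD x).hasSum.tendsto_sum_nat)

lemma floor_mul_numCyl_lt (hD : ∀ k, 0 < D k) (k : ℕ) {x : ℝ} (hx : x ∈ Ico 0 1) :
    ⌊x * numCyl D k⌋₊ < numCyl D k := by
  have hN : (0 : ℝ) < numCyl D k := by exact_mod_cast numCyl_pos hD k
  rw [Nat.floor_lt (by have := hx.1; positivity)]
  simpa using mul_lt_mul_of_pos_right hx.2 hN

variable (D)

noncomputable def cantorSet : Set ℝ := closure (cantorMap D '' Ico 0 1)

variable {D}

lemma cantorSet_subset_biUnion (hD : ∀ k, 0 < D k) (k : ℕ) :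
    cantorSet D ⊆
      ⋃ i ∈ Finset.range (numCyl D k), Icc (cylLeft D k i) (cylLeft D k i + scale D k / 8) := by
  refine closure_minimal ?_ (isClosed_biUnion_finset fun i _ => isClosed_Icc)
  rintro _ ⟨x, hx, rfl⟩
  exact mem_biUnion (Finset.mem_range.2 (floor_mul_numCyl_lt hD k hx)) (cantorMap_mem_Icc hD k x)

lemma isCompact_cantorSet (hD : ∀ k, 0 < D k) : IsCompact (cantorSet D) := by
  refine (isCompact_Icc (a := 0) (b := scale D 0 / 8)).of_isClosed_subset isClosed_closure
    ((cantorSet_subset_biUnion hD 0).trans ?_)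
  simp [cylLeft]

variable (D)

/-- Contains the differences of left endpoints of level `k`: passing to level `k + 1` adds
`scale D (k + 1)` times a difference of two digits, an integer of absolute value
`< branching D k`. -/
noncomputable def cylDiffs : ℕ → Finset ℝ
  | 0 => {0}
  | k + 1 => (cylDiffs k ×ˢ Finset.Ioo (-(branching D k : ℤ)) (branching D k)).image
      fun p => p.1 + scale D (k + 1) * p.2

variable {D}

lemma card_cylDiffs_le (k : ℕ) : (cylDiffs D k).card ≤ 2 ^ k * numCyl D k := by
  induction k with
  | zero => simp [cylDiffs]
  | succ k ih =>
    calc (cylDiffs D (k + 1)).card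
        ≤ (cylDiffs D k).card * (Finset.Ioo (-(branching D k : ℤ)) (branching D k)).card :=
          Finset.card_image_le.trans (Finset.card_product _ _).le
      _ ≤ 2 ^ k * numCyl D k * (2 * branching D k) := by
          gcongr; rw [Int.card_Ioo]; omega
      _ = 2 ^ (k + 1) * numCyl D (k + 1) := by rw [numCyl_succ]; ring

lemma cylLeft_sub_mem_cylDiffs (hD : ∀ k, 0 < D k) (k : ℕ) {i i' : ℕ}
    (hi : i < numCyl D k) (hi' : i' < numCyl D k) :
    cylLeft D k i - cylLeft D k i' ∈ cylDiffs D k := by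
  induction k generalizing i i' with
  | zero => simp [cylLeft, cylDiffs]
  | succ k ih =>
    have hM := branching_pos hD k
    have hlt {n : ℕ} (hn : n < numCyl D (k + 1)) : n / branching D k < numCyl D k := by
      rw [Nat.div_lt_iff_lt_mul hM, ← numCyl_succ]; exact hn
    refine Finset.mem_image.2 ⟨(_, (i % branching D k : ℕ) - (i' % branching D k : ℕ)),
      Finset.mem_product.2 ⟨ih (hlt hi) (hlt hi'), Finset.mem_Ioo.2 ⟨?_, ?_⟩⟩, ?_⟩
    · have := Nat.mod_lt i' hM; omega
    · have := Nat.mod_lt i hM; omega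
    · simp only [cylLeft, Int.cast_sub, Int.cast_natCast]; ring

lemma sub_mem_biUnion_of_mem_cantorSet (hD : ∀ k, 0 < D k) (k : ℕ) {x y : ℝ}
    (hx : x ∈ cantorSet D) (hy : y ∈ cantorSet D) :
    y - x ∈ ⋃ z ∈ cylDiffs D k, Icc (z - scale D k / 8) (z + scale D k / 8) := by
  obtain ⟨i', hi', hxi⟩ := mem_iUnion₂.1 (cantorSet_subset_biUnion hD k hx)
  obtain ⟨i, hi, hyi⟩ := mem_iUnion₂.1 (cantorSet_subset_biUnion hD k hy)
  rw [Finset.mem_range] at hi hi'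
  refine mem_biUnion (cylLeft_sub_mem_cylDiffs hD k hi hi') ⟨?_, ?_⟩ <;>
    linarith [hxi.1, hxi.2, hyi.1, hyi.2]

lemma volume_sub_cantorSet_eq_zero (hD : ∀ k, 0 < D k) :
    volume {z : ℝ | ∃ x ∈ cantorSet D, ∃ y ∈ cantorSet D, z = y - x} = 0 := by
  have hgeom :
      Tendsto (fun k : ℕ => ENNReal.ofReal (scale D 0 / 4 * (1 / 8) ^ k)) atTop (nhds 0) := by
    rw [← ENNReal.ofReal_zero]
    refine ENNReal.tendsto_ofReal ?_
    simpa using (tendsto_pow_atTop_nhds_zero_of_lt_one (by norm_num)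
      (by norm_num : (1 / 8 : ℝ) < 1)).const_mul (scale D 0 / 4)
  refine le_antisymm (ge_of_tendsto' hgeom fun k => ?_) zero_le
  have hs := scale_pos hD k
  have hcard : ((cylDiffs D k).card : ℝ) ≤ 2 ^ k * numCyl D k := by
    exact_mod_cast card_cylDiffs_le k
  calc volume {z : ℝ | ∃ x ∈ cantorSet D, ∃ y ∈ cantorSet D, z = y - x}
      ≤ volume (⋃ z ∈ cylDiffs D k, Icc (z - scale D k / 8) (z + scale D k / 8)) := by
        refine measure_mono ?_
        rintro _ ⟨x, hx, y, hy, rfl⟩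
        exact sub_mem_biUnion_of_mem_cantorSet hD k hx hy
    _ ≤ ∑ z ∈ cylDiffs D k, volume (Icc (z - scale D k / 8) (z + scale D k / 8)) :=
        measure_biUnion_finset_le _ _
    _ = ∑ _z ∈ cylDiffs D k, ENNReal.ofReal (scale D k / 4) :=
        Finset.sum_congr rfl fun z _ => by rw [Real.volume_Icc]; ring_nf
    _ = ENNReal.ofReal ((cylDiffs D k).card * (scale D k / 4)) := by
        rw [Finset.sum_const, nsmul_eq_mul, ENNReal.ofReal_mul (by positivity),
          ENNReal.ofReal_natCast]
    _ ≤ ENNReal.ofReal (scale D 0 / 4 * (1 / 8) ^ k) := by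
        refine ENNReal.ofReal_le_ofReal ?_
        calc ((cylDiffs D k).card : ℝ) * (scale D k / 4)
            ≤ 2 ^ k * (numCyl D k * scale D k) / 4 := by nlinarith
          _ ≤ 2 ^ k * (scale D 0 / 16 ^ k) / 4 := by gcongr; exact numCyl_mul_scale_le hD k
          _ = scale D 0 / 4 * (1 / 8) ^ k := by
            rw [show (16 : ℝ) ^ k = 2 ^ k * 8 ^ k by rw [← mul_pow]; norm_num, one_div_pow]
            field_simp

lemma cylLeft_succ_mul_add (hD : ∀ k, 0 < D k) (k q : ℕ) {r : ℕ} (hr : r < branching D k) :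
    cylLeft D (k + 1) (branching D k * q + r) = cylLeft D k q + scale D (k + 1) * r := by
  rw [cylLeft, Nat.mul_add_div (branching_pos hD k), Nat.div_eq_of_lt hr, add_zero,
    Nat.mul_add_mod, Nat.mod_eq_of_lt hr]

lemma cylLeft_add_le_succ (hD : ∀ k, 0 < D k) (k : ℕ) {i : ℕ} (hi : i + 1 < numCyl D k) :
    cylLeft D k i + 7 / 8 * scale D k ≤ cylLeft D k (i + 1) := by
  induction k generalizing i with
  | zero => simp at hi
  | succ k ih =>
    have hM := branching_pos hD k
    have hs := scale_pos hD (k + 1)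
    obtain ⟨q, r, hr, rfl⟩ : ∃ q r, r < branching D k ∧ i = branching D k * q + r :=
      ⟨i / branching D k, i % branching D k, Nat.mod_lt i hM, (Nat.div_add_mod i _).symm⟩
    rw [cylLeft_succ_mul_add hD k q hr]
    rcases Nat.lt_or_ge (r + 1) (branching D k) with hnext | hlast
    · rw [add_assoc _ r, cylLeft_succ_mul_add hD k q hnext]
      push_cast
      linarith [scale_succ_le (D := D) k]
    · -- `i` is the last child of `q`, so `i + 1` is the first child of `q + 1`
      have hr' : r + 1 = branching D k := by omega
      have hq : q + 1 < numCyl D k := by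
        rw [numCyl_succ, add_assoc, hr', ← Nat.mul_succ, mul_comm] at hi
        exact Nat.lt_of_mul_lt_mul_right hi
      rw [add_assoc _ r, hr', ← Nat.mul_succ, ← add_zero (branching D k * (q + 1)),
        cylLeft_succ_mul_add hD k _ hM]
      linarith [ih hq, scale_succ_le (D := D) k, scale_succ_mul_le hD k hr.le]

lemma cylLeft_add_mul_le (hD : ∀ k, 0 < D k) (k : ℕ) {i n : ℕ} (hin : i + n < numCyl D k) :
    cylLeft D k i + 7 / 8 * scale D k * n ≤ cylLeft D k (i + n) := by
  induction n with
  | zero => simp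
  | succ n ih =>
    have := cylLeft_add_le_succ hD k (i := i + n) (by omega)
    rw [← add_assoc]
    push_cast
    linarith [ih (by omega)]

lemma card_cylLeft_mem_Icc_le (hD : ∀ k, 0 < D k) (k : ℕ) {A B : ℝ} (hAB : A ≤ B) :
    (((Finset.range (numCyl D k)).filter (cylLeft D k · ∈ Icc A B)).card : ℝ)
      ≤ (B - A) / (7 / 8 * scale D k) + 1 := by
  set S := (Finset.range (numCyl D k)).filter (cylLeft D k · ∈ Icc A B)
  have hγ : 0 < 7 / 8 * scale D k := by have := scale_pos hD k; positivity
  rcases S.eq_empty_or_nonempty with hS | hS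
  · rw [hS, Finset.card_empty, Nat.cast_zero]
    have := div_nonneg (sub_nonneg.2 hAB) hγ.le
    linarith
  -- `S` lies between its extreme elements, whose left endpoints are `7/8 s`-separated
  have hmin := Finset.mem_filter.1 (S.min'_mem hS)
  have hmax := Finset.mem_filter.1 (S.max'_mem hS)
  have hle : S.min' hS ≤ S.max' hS := S.min'_le _ (S.max'_mem hS)
  have hsep := cylLeft_add_mul_le hD k (i := S.min' hS) (n := S.max' hS - S.min' hS)
    (by rw [Nat.add_sub_cancel' hle]; exact Finset.mem_range.1 hmax.1)
  rw [Nat.add_sub_cancel' hle] at hsep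
  have hcard : S.card ≤ S.max' hS + 1 - S.min' hS :=
    (Finset.card_le_card fun i hi => Finset.mem_Icc.2 ⟨S.min'_le i hi, S.le_max' i hi⟩).trans
      (Nat.card_Icc _ _).le
  calc (S.card : ℝ) ≤ (S.max' hS - S.min' hS : ℕ) + 1 := by
        exact_mod_cast (by omega : S.card ≤ S.max' hS - S.min' hS + 1)
    _ ≤ (B - A) / (7 / 8 * scale D k) + 1 := by
        gcongr
        rw [le_div_iff₀ hγ]
        linarith [hmin.2.1, hmax.2.2]

variable (D)

noncomputable def cantorMeasure : Measure ℝ := (volume.restrict (Ico 0 1)).map (cantorMap D)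

variable {D}

lemma cantorMeasure_apply (hD : ∀ k, 0 < D k) {s : Set ℝ} (hs : MeasurableSet s) :
    cantorMeasure D s = volume (cantorMap D ⁻¹' s ∩ Ico 0 1) := by
  rw [cantorMeasure, Measure.map_apply (measurable_cantorMap hD) hs,
    Measure.restrict_apply (measurable_cantorMap hD hs)]

lemma cantorMeasure_cantorSet (hD : ∀ k, 0 < D k) : cantorMeasure D (cantorSet D) = 1 := by
  unfold cantorSet
  rw [cantorMeasure_apply hD isClosed_closure.measurableSet,
    inter_eq_right.2 (image_subset_iff.1 subset_closure), Real.volume_Ico]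
  simp

lemma preimage_Icc_inter_subset (hD : ∀ k, 0 < D k) (k : ℕ) (A B : ℝ) :
    cantorMap D ⁻¹' Icc A B ∩ Ico 0 1 ⊆
      ⋃ i ∈ (Finset.range (numCyl D k)).filter (cylLeft D k · ∈ Icc (A - scale D k / 8) B),
        Ico ((i : ℝ) / numCyl D k) ((i + 1) / numCyl D k) := by
  rintro x ⟨hfx, hx⟩
  have hN : (0 : ℝ) < numCyl D k := by exact_mod_cast numCyl_pos hD k
  have hcyl := cantorMap_mem_Icc hD k x
  refine mem_biUnion (Finset.mem_filter.2 ⟨Finset.mem_range.2 (floor_mul_numCyl_lt hD k hx),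
    by constructor <;> linarith [hfx.1, hfx.2, hcyl.1, hcyl.2]⟩) ⟨?_, ?_⟩
  · rw [div_le_iff₀ hN]; exact Nat.floor_le (by have := hx.1; positivity)
  · rw [lt_div_iff₀ hN]; exact Nat.lt_floor_add_one _

lemma cantorMeasure_Icc_le (hD : ∀ k, 0 < D k) (k : ℕ) {A B : ℝ} (hAB : A ≤ B) :
    cantorMeasure D (Icc A B) ≤
      ENNReal.ofReal (((B - A + scale D k / 8) / (7 / 8 * scale D k) + 1) / numCyl D k) := by
  set S := (Finset.range (numCyl D k)).filter (cylLeft D k · ∈ Icc (A - scale D k / 8) B)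
  have hN : (0 : ℝ) < numCyl D k := by exact_mod_cast numCyl_pos hD k
  have hS : (S.card : ℝ) ≤ (B - A + scale D k / 8) / (7 / 8 * scale D k) + 1 := by
    have := card_cylLeft_mem_Icc_le hD k (A := A - scale D k / 8) (B := B)
      (by linarith [scale_pos hD k])
    rwa [sub_sub_eq_add_sub, add_sub_right_comm] at this
  rw [cantorMeasure_apply hD measurableSet_Icc]
  calc volume (cantorMap D ⁻¹' Icc A B ∩ Ico 0 1)
      ≤ ∑ i ∈ S, volume (Ico ((i : ℝ) / numCyl D k) ((i + 1) / numCyl D k)) :=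
        (measure_mono (preimage_Icc_inter_subset hD k A B)).trans (measure_biUnion_finset_le _ _)
    _ = ∑ _i ∈ S, ENNReal.ofReal (1 / numCyl D k) :=
        Finset.sum_congr rfl fun i _ => by rw [Real.volume_Ico]; congr 1; ring
    _ = ENNReal.ofReal (S.card / numCyl D k) := by
        rw [Finset.sum_const, nsmul_eq_mul, ← ENNReal.ofReal_natCast,
          ← ENNReal.ofReal_mul (by positivity), mul_one_div]
    _ ≤ _ := by gcongr

lemma cantorMeasure_singleton (hD : ∀ k, 0 < D k) (a : ℝ) : cantorMeasure D {a} = 0 := by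
  have hN : Tendsto (fun k => (numCyl D k : ℝ)) atTop atTop :=
    tendsto_atTop_mono (fun k => by exact_mod_cast two_pow_le_numCyl hD k)
      (tendsto_pow_atTop_atTop_of_one_lt (one_lt_two (α := ℝ)))
  have hlim : Tendsto (fun k => ENNReal.ofReal (8 / 7 / numCyl D k)) atTop (nhds 0) := by
    simpa using ENNReal.tendsto_ofReal (tendsto_const_nhds.div_atTop hN)
  refine le_antisymm (ge_of_tendsto' hlim fun k => ?_) zero_le
  have hs := scale_pos hD k
  calc cantorMeasure D {a} = cantorMeasure D (Icc a a) := by rw [Icc_self]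
    _ ≤ _ := cantorMeasure_Icc_le hD k le_rfl
    _ = ENNReal.ofReal (8 / 7 / numCyl D k) := by congr 2; field_simp; ring

lemma cantorMeasure_Icc_le_of_scale_succ_le (hD : ∀ k, 0 < D k) {k : ℕ} (a : ℝ) {d : ℝ}
    (hd : 0 < d) (hk : scale D (k + 1) ≤ d) :
    cantorMeasure D (Icc a (a + d)) ≤ ENNReal.ofReal (96 * 32 ^ k * d / scale D 0) := by
  refine (cantorMeasure_Icc_le hD (k + 1) (by linarith)).trans (ENNReal.ofReal_le_ofReal ?_)
  have hs := scale_pos hD (k + 1)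
  have hs0 := scale_pos hD 0
  have hN : (0 : ℝ) < numCyl D (k + 1) := by exact_mod_cast numCyl_pos hD (k + 1)
  calc ((a + d - a + scale D (k + 1) / 8) / (7 / 8 * scale D (k + 1)) + 1) / numCyl D (k + 1)
      ≤ 3 * d / scale D (k + 1) / numCyl D (k + 1) := by
        gcongr
        rw [add_sub_cancel_left, div_add_one (by positivity), div_le_div_iff₀ (by positivity) hs]
        nlinarith
    _ = 3 * d / (numCyl D (k + 1) * scale D (k + 1)) := by ring
    _ ≤ 3 * d / (scale D 0 / 32 ^ (k + 1)) := by
        gcongr; exact scale_zero_div_le_numCyl_mul_scale hD (k + 1)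
    _ = 96 * 32 ^ k * d / scale D 0 := by field_simp; ring

lemma exists_scale_succ_le_le (hD : ∀ k, 0 < D k) {d : ℝ} (hd : 0 < d) (hd0 : d ≤ scale D 0) :
    ∃ k, scale D (k + 1) ≤ d ∧ d ≤ scale D k := by
  classical
  have hex : ∃ k, scale D (k + 1) ≤ d :=
    (((tendsto_scale_atTop hD).comp (tendsto_add_atTop_nat 1)).eventually
      (Iic_mem_nhds hd)).exists
  refine ⟨Nat.find hex, Nat.find_spec hex, ?_⟩
  match hk : Nat.find hex with
  | 0 => exact hd0
  | k + 1 => exact (not_le.1 (Nat.find_min hex (hk ▸ Nat.lt_succ_self k))).le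

lemma smul_cantorMeasure_le_gaugeMeasure (hD : ∀ k, 0 < D k) {h : ℝ → ℝ}
    (hh : ∀ k x, 0 < x → x ≤ D k → 32 ^ k * x ≤ h x) :
    ENNReal.ofReal (scale D 0 / 96) • cantorMeasure D ≤ gaugeMeasure h := by
  have hs0 := scale_pos hD 0
  refine Measure.le_mkMetric _ _ _ (ENNReal.ofReal_pos.2 hs0) fun t ht => ?_
  show _ ≤ ENNReal.ofReal (h (Metric.diam t))
  rcases t.eq_empty_or_nonempty with rfl | hne
  · simp
  have hbdd : Bornology.IsBounded t :=
    Metric.isBounded_iff_ediam_ne_top.2 (ne_top_of_le_ne_top ENNReal.ofReal_ne_top ht)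
  have hsub := subset_Icc_sInf_add_diam hbdd
  have hd0 : Metric.diam t ≤ scale D 0 := ENNReal.toReal_le_of_le_ofReal hs0.le ht
  rw [Measure.smul_apply, smul_eq_mul]
  rcases (Metric.diam_nonneg (s := t)).eq_or_lt with hd | hd
  · rw [← hd, add_zero, Icc_self] at hsub
    rw [measure_mono_null hsub (cantorMeasure_singleton hD _), mul_zero]
    exact zero_le
  obtain ⟨k, hk1, hk⟩ := exists_scale_succ_le_le hD hd hd0
  calc ENNReal.ofReal (scale D 0 / 96) * cantorMeasure D t
      ≤ ENNReal.ofReal (scale D 0 / 96) *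
          ENNReal.ofReal (96 * 32 ^ k * Metric.diam t / scale D 0) := by
        gcongr
        exact (measure_mono hsub).trans (cantorMeasure_Icc_le_of_scale_succ_le hD _ hd hk1)
    _ = ENNReal.ofReal (32 ^ k * Metric.diam t) := by
        rw [← ENNReal.ofReal_mul (by positivity)]; congr 1; field_simp
    _ ≤ ENNReal.ofReal (h (Metric.diam t)) :=
        ENNReal.ofReal_le_ofReal (hh k _ hd (hk.trans (scale_le k)))

end FastCantor

open FastCantor

lemma Prec.exists_mul_le {h : ℝ → ℝ} (hpos : ∀ t > 0, 0 < h t) (hprec : Prec h fun x => x)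
    {c : ℝ} (hc : 0 < c) : ∃ δ > 0, ∀ x, 0 < x → x ≤ δ → c * x ≤ h x := by
  obtain ⟨δ, hδ, hsub⟩ :=
    mem_nhdsGT_iff_exists_Ioc_subset.1 (hprec (Iio_mem_nhds (inv_pos.2 hc)))
  refine ⟨δ, hδ, fun x hx hxδ => ?_⟩
  have hlt : x / h x < c⁻¹ := hsub ⟨hx, hxδ⟩
  rw [div_lt_iff₀ (hpos x hx), ← div_eq_inv_mul, lt_div_iff₀ hc, mul_comm] at hlt
  exact hlt.le

theorem stmt_12 (h : ℝ → ℝ) (hdim : IsDimFun h) (hprec : Prec h (fun x : ℝ => x)) :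
    ∃ E : Set ℝ, IsCompact E ∧ 0 < gaugeMeasure h E ∧
      interior {z : ℝ | ∃ x ∈ E, ∃ y ∈ E, z = y - x} = ∅ := by
  obtain ⟨-, hpos, -⟩ := hdim
  choose D hD hDh using fun k : ℕ => hprec.exists_mul_le hpos (c := 32 ^ k) (by positivity)
  refine ⟨cantorSet D, isCompact_cantorSet hD, ?_,
    volume.interior_eq_empty_of_null (volume_sub_cantorSet_eq_zero hD)⟩
  calc (0 : ENNReal) < ENNReal.ofReal (scale D 0 / 96) * cantorMeasure D (cantorSet D) := by
        simpa [cantorMeasure_cantorSet hD] using scale_pos hD 0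
    _ ≤ gaugeMeasure h (cantorSet D) := smul_cantorMeasure_le_gaugeMeasure hD hDh _
end

section
/- Let d ∈ ℕ and h a dimension function with h ≺ x^d. Then there exists a compact set E ⊆ ℝ^d with ℋ^h(E) > 0 containing no four distinct points x₁, x₂, x₃, x₄ with x₁ − x₂ + x₃ − x₄ = 0 (i.e. E contains no vertices of a parallelogram). -/
open MeasureTheory Filter Set

/-!
`E` is a Cantor-type set. At each stage there are `k` cubes of side `δ`; each is replaced by
`m ^ d` subcubes of side `γ = δ / (K (m + 1))`, `K = 12 * 4 ^ k`, whose lower corners lie on a grid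
of mesh `K γ`, the grid inside the `l`-th parent being shifted along the first axis by
`3 * 4 ^ l * γ`. If `x₁ - x₂ + x₃ - x₄ = 0`, the same alternating sum of the corners of the cubes
containing the `xⱼ` is at most `2 γ` in each coordinate. By induction on the stage it vanishes,
which forces the digits to cancel and `4 ^ l₁ + 4 ^ l₃ = 4 ^ l₂ + 4 ^ l₄`, so the parents pair up;
this is impossible at a stage that separates `x₁` from both `x₂` and `x₄`.

Pushing Lebesgue measure on `[0, 1)` forward along the natural parametrisation of `E` gives a
measure of mass `1 / k` on each cube. Since `x ^ d = o(h x)`, `m` can be chosen so large that a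
set of diameter `t ∈ [γ, δ)` has mass `O(h t)`, and the mass distribution principle gives
`𝓗^h(E) > 0`.
-/

open scoped Topology ENNReal Finset

section GaugeFunction

variable {h g : ℝ → ℝ}

lemma Prec.eventually_const_mul_le (hprec : Prec h g) (hpos : ∀ t > 0, 0 < h t) (L : ℝ) :
    ∀ᶠ x in 𝓝[>] 0, L * g x ≤ h x := by
  have hε : (0 : ℝ) < 1 / (|L| + 1) := by positivity
  have hnorm : Tendsto (fun x => ‖g x / h x‖) (𝓝[>] 0) (𝓝 0) := by simpa using hprec.norm
  filter_upwards [hnorm.eventually_lt_const hε, self_mem_nhdsWithin] with x hx (hx0 : 0 < x)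
  have hhx := hpos x hx0
  rw [norm_div, Real.norm_eq_abs, Real.norm_eq_abs, abs_of_pos hhx,
    div_lt_div_iff₀ hhx (by positivity), one_mul] at hx
  calc L * g x ≤ |L| * |g x| := (le_abs_self _).trans (abs_mul L (g x)).le
    _ ≤ (|L| + 1) * |g x| := by gcongr; linarith
    _ ≤ h x := by linarith

lemma Prec.exists_scale (hprec : Prec h g) (hpos : ∀ t > 0, 0 < h t) (L : ℝ) :
    ∃ ρ > 0, ∀ x ∈ Ioc 0 ρ, L * g x ≤ h x :=
  mem_nhdsGT_iff_exists_Ioc_subset.mp (hprec.eventually_const_mul_le hpos L)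

lemma IsDimFun.exists_pow_le_const_mul {d : ℕ} (hdim : IsDimFun h)
    (hprec : Prec h (fun x : ℝ => x ^ d)) : ∃ C > 0, ∀ t ∈ Ioc (0 : ℝ) 1, t ^ d ≤ C * h t := by
  obtain ⟨ρ, hρ, hρh⟩ := hprec.exists_scale hdim.2.1 1
  have hhρ := hdim.2.1 ρ hρ
  refine ⟨max 1 (h ρ)⁻¹, by positivity, fun t ⟨ht0, ht1⟩ => ?_⟩
  rcases le_or_gt t ρ with htρ | hρt
  · calc t ^ d ≤ h t := by simpa using hρh t ⟨ht0, htρ⟩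
      _ ≤ max 1 (h ρ)⁻¹ * h t := le_mul_of_one_le_left (hdim.2.1 t ht0).le (le_max_left _ _)
  · calc t ^ d ≤ 1 := pow_le_one₀ ht0.le ht1
      _ = (h ρ)⁻¹ * h ρ := (inv_mul_cancel₀ hhρ.ne').symm
      _ ≤ max 1 (h ρ)⁻¹ * h t := by
        gcongr
        · exact le_max_right _ _
        · exact hdim.2.2.1 hρ.le (hρ.trans hρt).le hρt.le

end GaugeFunction

theorem MeasureTheory.Measure.mkMetric_pos_of_le {X : Type*} [EMetricSpace X]
    [MeasurableSpace X] [BorelSpace X] {m : ℝ≥0∞ → ℝ≥0∞} {μ : Measure X} {c r : ℝ≥0∞}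
    (hc : c ≠ ⊤) (hr : 0 < r) (hμ : ∀ s, Metric.ediam s ≤ r → μ s ≤ c * m (Metric.ediam s))
    {E : Set X} (hE : 0 < μ E) : 0 < Measure.mkMetric m E := by
  have hle : c⁻¹ • μ ≤ Measure.mkMetric m := by
    refine Measure.le_mkMetric m _ r hr fun s hs => ?_
    calc (c⁻¹ • μ) s = c⁻¹ * μ s := rfl
      _ ≤ c⁻¹ * (c * m (Metric.ediam s)) := by gcongr; exact hμ s hs
      _ = c⁻¹ * c * m (Metric.ediam s) := (mul_assoc _ _ _).symm
      _ ≤ m (Metric.ediam s) := mul_le_of_le_one_left' (ENNReal.inv_mul_le_one c)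
  exact (ENNReal.mul_pos (ENNReal.inv_ne_zero.mpr hc) hE.ne').trans_le (hle E)

lemma EuclideanSpace.abs_sub_apply_le_ediam {d : ℕ} {S : Set (EuclideanSpace ℝ (Fin d))}
    (hS : Metric.ediam S ≠ ⊤) {x y : EuclideanSpace ℝ (Fin d)} (hx : x ∈ S) (hy : y ∈ S)
    (a : Fin d) : |x a - y a| ≤ (Metric.ediam S).toReal :=
  calc |x a - y a| = dist (x a) (y a) := (Real.dist_eq _ _).symm
    _ ≤ dist x y := PiLp.dist_apply_le x y a
    _ ≤ (Metric.ediam S).toReal := by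
      rw [dist_edist]
      exact ENNReal.toReal_mono hS (Metric.edist_le_ediam_of_mem hx hy)

lemma Nat.mem_Icc_of_abs_sub_le {u v : ℕ} {s : ℝ} (h : |(u : ℝ) - v| ≤ s) :
    u ∈ Finset.Icc (v - ⌊s⌋₊) (v + ⌊s⌋₊) := by
  rw [abs_le] at h
  rw [Finset.mem_Icc]
  constructor
  · rcases le_total u v with huv | hvu
    · have : v - u ≤ ⌊s⌋₊ := Nat.le_floor (by rw [Nat.cast_sub huv]; linarith)
      omega
    · omega
  · rcases le_total u v with huv | hvu
    · omega
    · have : u - v ≤ ⌊s⌋₊ := Nat.le_floor (by rw [Nat.cast_sub hvu]; linarith)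
      omega

lemma Int.eq_zero_of_abs_mul_add_le {K J Q : ℤ} (h : |K * J + Q| ≤ 2) (hQ : |Q| + 2 < K) :
    J = 0 := by
  by_contra hJ
  have hK : 0 < K := by linarith [abs_nonneg Q]
  have h₁ : K ≤ |K * J| := by
    rw [abs_mul, abs_of_pos hK]
    exact le_mul_of_one_le_right hK.le (Int.one_le_abs hJ)
  have h₂ : |K * J| ≤ |K * J + Q| + |Q| := by
    simpa using abs_sub (K * J + Q) Q
  linarith

lemma four_pow_add_four_pow_inj {a b c e : ℕ} (h : 4 ^ a + 4 ^ b = 4 ^ c + 4 ^ e) :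
    a = c ∧ b = e ∨ a = e ∧ b = c := by
  have hmax : ∀ {a b c e : ℕ}, a ≤ b → c ≤ e → 4 ^ a + 4 ^ b = 4 ^ c + 4 ^ e → e ≤ b := by
    intro a b c e hab hce h
    by_contra! hbe
    have h₁ : 4 ^ a ≤ 4 ^ b := Nat.pow_le_pow_right (by norm_num) hab
    have h₂ : 4 ^ (b + 1) ≤ 4 ^ e := Nat.pow_le_pow_right (by norm_num) hbe
    have h₃ : 1 ≤ 4 ^ b := Nat.one_le_pow _ _ (by norm_num)
    rw [pow_succ] at h₂
    linarith [Nat.zero_le (4 ^ c)]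
  have hsorted : ∀ {a b c e : ℕ}, a ≤ b → c ≤ e → 4 ^ a + 4 ^ b = 4 ^ c + 4 ^ e →
      a = c ∧ b = e := by
    intro a b c e hab hce h
    obtain rfl : b = e := le_antisymm (hmax hce hab h.symm) (hmax hab hce h)
    exact ⟨Nat.pow_right_injective (by norm_num : 2 ≤ 4) (Nat.add_right_cancel h), rfl⟩
  rcases le_total a b with hab | hba <;> rcases le_total c e with hce | hec
  · exact .inl (hsorted hab hce h)
  · exact .inr (hsorted hab hec (by omega))
  · exact .inr (hsorted hba hce (by omega)).symm
  · exact .inl (hsorted hba hec (by omega)).symm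

def spacing (k : ℕ) : ℕ := 12 * 4 ^ k

lemma spacing_pos (k : ℕ) : 0 < spacing k := by
  unfold spacing
  positivity

lemma twelve_le_spacing (k : ℕ) : 12 ≤ spacing k :=
  le_mul_of_one_le_right' (Nat.one_le_pow _ _ (by norm_num))

lemma three_mul_abs_four_pow_alt_add_two_lt {k l₁ l₂ l₃ l₄ : ℕ} (h₁ : l₁ < k) (h₂ : l₂ < k)
    (h₃ : l₃ < k) (h₄ : l₄ < k) :
    3 * |(4 : ℤ) ^ l₁ - 4 ^ l₂ + 4 ^ l₃ - 4 ^ l₄| + 2 < spacing k := by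
  have hpow : ∀ {l}, l < k → (1 : ℤ) ≤ 4 ^ l ∧ (4 : ℤ) ^ l + 1 ≤ 4 ^ k := fun hl =>
    ⟨one_le_pow₀ (by norm_num), Int.add_one_le_of_lt (pow_lt_pow_right₀ (by norm_num) hl)⟩
  obtain ⟨h₁, h₁'⟩ := hpow h₁
  obtain ⟨h₂, h₂'⟩ := hpow h₂
  obtain ⟨h₃, h₃'⟩ := hpow h₃
  obtain ⟨h₄, h₄'⟩ := hpow h₄
  push_cast [spacing]
  cases abs_cases ((4 : ℤ) ^ l₁ - 4 ^ l₂ + 4 ^ l₃ - 4 ^ l₄) <;> linarith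

structure SplittingRule (d : ℕ) where
  mult : ℕ → ℝ → ℕ
  mult_pos : ∀ k δ, 0 < mult k δ

noncomputable section

namespace SplittingRule

variable {d : ℕ} (R : SplittingRule d)

def stage : ℕ → ℕ × ℝ
  | 0 => (1, 1)
  | n + 1 =>
    let k := (stage n).1
    let δ := (stage n).2
    (k * R.mult k δ ^ d, δ / (spacing k * (R.mult k δ + 1)))

def numCubes (n : ℕ) : ℕ := (R.stage n).1

def side (n : ℕ) : ℝ := (R.stage n).2

def split (n : ℕ) : ℕ := R.mult (R.numCubes n) (R.side n)

def numChildren (n : ℕ) : ℕ := R.split n ^ d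

lemma numCubes_zero : R.numCubes 0 = 1 := rfl

lemma side_zero : R.side 0 = 1 := rfl

lemma numCubes_succ (n : ℕ) : R.numCubes (n + 1) = R.numCubes n * R.numChildren n := rfl

lemma side_succ (n : ℕ) :
    R.side (n + 1) = R.side n / (spacing (R.numCubes n) * (R.split n + 1)) := rfl

lemma split_pos (n : ℕ) : 0 < R.split n := R.mult_pos _ _

lemma numChildren_pos (n : ℕ) : 0 < R.numChildren n := pow_pos (R.split_pos n) d

lemma numCubes_pos (n : ℕ) : 0 < R.numCubes n := by
  induction n with
  | zero => exact Nat.one_pos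
  | succ n ih => exact Nat.mul_pos ih (R.numChildren_pos n)

lemma spacing_mul_split_pos (n : ℕ) :
    (0 : ℝ) < spacing (R.numCubes n) * (R.split n + 1) := by
  have := spacing_pos (R.numCubes n)
  positivity

lemma side_pos (n : ℕ) : 0 < R.side n := by
  induction n with
  | zero => exact one_pos
  | succ n ih => exact div_pos ih (R.spacing_mul_split_pos n)

lemma side_succ_mul (n : ℕ) :
    R.side (n + 1) * (spacing (R.numCubes n) * (R.split n + 1)) = R.side n :=
  div_mul_cancel₀ _ (R.spacing_mul_split_pos n).ne'

lemma side_succ_le_half (n : ℕ) : R.side (n + 1) ≤ R.side n / 2 := by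
  rw [side_succ]
  gcongr
  · exact (R.side_pos n).le
  · have h12 : (12 : ℝ) ≤ spacing (R.numCubes n) := by exact_mod_cast twelve_le_spacing _
    have : (0 : ℝ) ≤ R.split n := Nat.cast_nonneg _
    nlinarith

lemma side_antitone : Antitone R.side :=
  antitone_nat_of_succ_le fun n => (R.side_succ_le_half n).trans (half_le_self (R.side_pos n).le)

lemma side_le_half_pow (n : ℕ) : R.side n ≤ (1 / 2) ^ n := by
  induction n with
  | zero => exact le_of_eq R.side_zero
  | succ n ih =>
    calc R.side (n + 1) ≤ R.side n / 2 := R.side_succ_le_half n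
      _ ≤ (1 / 2) ^ n / 2 := by gcongr
      _ = (1 / 2) ^ (n + 1) := by ring

lemma exists_side_lt {ε : ℝ} (hε : 0 < ε) : ∃ n, R.side n < ε := by
  obtain ⟨n, hn⟩ := exists_pow_lt_of_lt_one hε (by norm_num : (1 / 2 : ℝ) < 1)
  exact ⟨n, (R.side_le_half_pow n).trans_lt hn⟩

lemma exists_side_succ_le_lt {t : ℝ} (ht₀ : 0 < t) (ht₁ : t < 1) :
    ∃ n, R.side (n + 1) ≤ t ∧ t < R.side n := by
  classical
  have hex : ∃ n, R.side n ≤ t := (R.exists_side_lt ht₀).imp fun _ => le_of_lt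
  have hpos : Nat.find hex ≠ 0 := fun h0 => by
    have := Nat.find_spec hex
    rw [h0, side_zero] at this
    linarith
  obtain ⟨n, hn⟩ := Nat.exists_eq_succ_of_ne_zero hpos
  have hspec := Nat.find_spec hex
  rw [hn] at hspec
  exact ⟨n, hspec, not_le.mp (Nat.find_min hex (by omega))⟩

lemma parent_lt {n i : ℕ} (hi : i < R.numCubes (n + 1)) : i / R.numChildren n < R.numCubes n :=
  Nat.div_lt_of_lt_mul (by rwa [mul_comm, ← numCubes_succ])

def digits (n i : ℕ) : Fin d → Fin (R.split n) :=
  finFunctionFinEquiv.symm ⟨i % R.numChildren n, Nat.mod_lt _ (R.numChildren_pos n)⟩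

lemma eq_of_parent_eq_of_digits_eq {n i i' : ℕ} (hp : i / R.numChildren n = i' / R.numChildren n)
    (hdig : R.digits n i = R.digits n i') : i = i' := by
  have hmod : i % R.numChildren n = i' % R.numChildren n :=
    congrArg Fin.val (finFunctionFinEquiv.symm.injective hdig)
  rw [← Nat.div_add_mod i (R.numChildren n), ← Nat.div_add_mod i' (R.numChildren n), hp, hmod]

def offset (n i : ℕ) (a : Fin d) : ℕ :=
  spacing (R.numCubes n) * R.digits n i a +
    if (a : ℕ) = 0 then 3 * 4 ^ (i / R.numChildren n) else 0

def corner : ℕ → ℕ → Fin d → ℝ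
  | 0, _, _ => 0
  | n + 1, i, a => corner n (i / R.numChildren n) a + R.side (n + 1) * R.offset n i a

lemma corner_succ (n i : ℕ) (a : Fin d) :
    R.corner (n + 1) i a = R.corner n (i / R.numChildren n) a + R.side (n + 1) * R.offset n i a :=
  rfl

def cell (n i : ℕ) : Set (EuclideanSpace ℝ (Fin d)) :=
  {x | ∀ a, x a ∈ Icc (R.corner n i a) (R.corner n i a + R.side n)}

lemma corner_mem_cell (n i : ℕ) :
    (WithLp.toLp 2 (R.corner n i) : EuclideanSpace ℝ (Fin d)) ∈ R.cell n i := fun _ =>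
  ⟨le_rfl, le_add_of_nonneg_right (R.side_pos n).le⟩

lemma isCompact_cell (n i : ℕ) : IsCompact (R.cell n i) := by
  have := (EuclideanSpace.equiv (Fin d) ℝ).toHomeomorph.isCompact_preimage.mpr
    (isCompact_univ_pi fun a => isCompact_Icc (a := R.corner n i a) (b := R.corner n i a + R.side n))
  convert this using 1
  ext x
  simp only [cell, mem_ofPred_eq, mem_preimage, mem_univ_pi]
  rfl

lemma offset_add_one_le {n i : ℕ} (hi : i < R.numCubes (n + 1)) (a : Fin d) :
    R.offset n i a + 1 ≤ spacing (R.numCubes n) * (R.split n + 1) := by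
  have hdig : spacing (R.numCubes n) * R.digits n i a ≤ spacing (R.numCubes n) * R.split n :=
    Nat.mul_le_mul_left _ (R.digits n i a).is_lt.le
  have hpow : 4 ^ (i / R.numChildren n) ≤ 4 ^ R.numCubes n :=
    Nat.pow_le_pow_right (by norm_num) (R.parent_lt hi).le
  have h1 : 1 ≤ 4 ^ R.numCubes n := Nat.one_le_pow _ _ (by norm_num)
  unfold offset spacing at *
  split_ifs <;> nlinarith

lemma cell_succ_subset {n i : ℕ} (hi : i < R.numCubes (n + 1)) :
    R.cell (n + 1) i ⊆ R.cell n (i / R.numChildren n) := by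
  intro x hx a
  obtain ⟨hlo, hhi⟩ := hx a
  have hoff : (R.offset n i a : ℝ) + 1 ≤ spacing (R.numCubes n) * (R.split n + 1) := by
    exact_mod_cast R.offset_add_one_le hi a
  have hγ := R.side_pos (n + 1)
  rw [corner_succ] at hlo hhi
  constructor
  · nlinarith [Nat.cast_nonneg (α := ℝ) (R.offset n i a)]
  · nlinarith [R.side_succ_mul n]

lemma corner_sub_corner_of_parent_eq {n i i' : ℕ}
    (hp : i / R.numChildren n = i' / R.numChildren n) (a : Fin d) :
    R.corner (n + 1) i a - R.corner (n + 1) i' a =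
      R.side (n + 1) * spacing (R.numCubes n) * ((R.digits n i a : ℝ) - R.digits n i' a) := by
  simp only [corner_succ, offset, hp]
  push_cast
  ring

lemma abs_sub_le_side {n i : ℕ} {x y : EuclideanSpace ℝ (Fin d)} (hx : x ∈ R.cell n i)
    (hy : y ∈ R.cell n i) (a : Fin d) : |x a - y a| ≤ R.side n := by
  simpa [Real.dist_eq] using Real.dist_le_of_mem_Icc (hx a) (hy a)

lemma abs_corner_sub_le {n i i' : ℕ} {x y : EuclideanSpace ℝ (Fin d)} (hx : x ∈ R.cell n i)
    (hy : y ∈ R.cell n i') (a : Fin d) :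
    |R.corner n i a - R.corner n i' a| ≤ |x a - y a| + R.side n := by
  obtain ⟨hx₁, hx₂⟩ := hx a
  obtain ⟨hy₁, hy₂⟩ := hy a
  rw [abs_le]
  constructor <;> linarith [le_abs_self (x a - y a), neg_abs_le (x a - y a)]

lemma exists_side_le_abs_sub {n i i' : ℕ} (hi : i < R.numCubes n) (hi' : i' < R.numCubes n)
    (hne : i ≠ i') {x y : EuclideanSpace ℝ (Fin d)} (hx : x ∈ R.cell n i) (hy : y ∈ R.cell n i') :
    ∃ a, R.side n ≤ |x a - y a| := by
  induction n generalizing i i' with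
  | zero =>
    simp only [numCubes_zero, Nat.lt_one_iff] at hi hi'
    exact absurd (hi.trans hi'.symm) hne
  | succ n ih =>
    by_cases hp : i / R.numChildren n = i' / R.numChildren n
    · obtain ⟨a, ha⟩ : ∃ a, R.digits n i a ≠ R.digits n i' a := by
        by_contra! h
        exact hne (R.eq_of_parent_eq_of_digits_eq hp (funext h))
      refine ⟨a, ?_⟩
      have hdig : (1 : ℝ) ≤ |(R.digits n i a : ℝ) - R.digits n i' a| := by
        have : ((R.digits n i a : ℕ) : ℤ) - (R.digits n i' a : ℕ) ≠ 0 :=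
          sub_ne_zero.mpr (by exact_mod_cast Fin.val_injective.ne ha)
        exact_mod_cast Int.one_le_abs this
      have h12 : (12 : ℝ) ≤ spacing (R.numCubes n) := by exact_mod_cast twelve_le_spacing _
      have hγ := R.side_pos (n + 1)
      have key := R.abs_corner_sub_le hx hy a
      rw [R.corner_sub_corner_of_parent_eq hp, abs_mul, abs_of_pos (by positivity)] at key
      have : R.side (n + 1) * 12 * 1 ≤
          R.side (n + 1) * spacing (R.numCubes n) * |(R.digits n i a : ℝ) - R.digits n i' a| := by
        gcongr
      linarith
    · obtain ⟨a, ha⟩ := ih (R.parent_lt hi) (R.parent_lt hi') hp (R.cell_succ_subset hi hx)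
        (R.cell_succ_subset hi' hy)
      exact ⟨a, (R.side_antitone n.le_succ).trans ha⟩

lemma eq_of_mem_cell {n i i' : ℕ} (hi : i < R.numCubes n) (hi' : i' < R.numCubes n)
    {x : EuclideanSpace ℝ (Fin d)} (hx : x ∈ R.cell n i) (hx' : x ∈ R.cell n i') : i = i' := by
  by_contra hne
  obtain ⟨a, ha⟩ := R.exists_side_le_abs_sub hi hi' hne hx hx'
  simp only [sub_self, abs_zero] at ha
  exact (R.side_pos n).not_ge ha

def limitSet : Set (EuclideanSpace ℝ (Fin d)) := ⋂ n, ⋃ i < R.numCubes n, R.cell n i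

lemma isCompact_limitSet : IsCompact R.limitSet := by
  refine (R.isCompact_cell 0 0).of_isClosed_subset (isClosed_iInter fun n =>
    (finite_lt_nat _).isClosed_biUnion fun i _ => (R.isCompact_cell n i).isClosed) fun x hx => ?_
  obtain ⟨i, hi, hxi⟩ : ∃ i < R.numCubes 0, x ∈ R.cell 0 i := by simpa using mem_iInter.mp hx 0
  rwa [numCubes_zero, Nat.lt_one_iff] at hi

lemma exists_address {x : EuclideanSpace ℝ (Fin d)} (hx : x ∈ R.limitSet) :
    ∃ I : ℕ → ℕ, (∀ n, I n < R.numCubes n ∧ x ∈ R.cell n (I n)) ∧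
      ∀ n, I (n + 1) / R.numChildren n = I n := by
  have : ∀ n, ∃ i, i < R.numCubes n ∧ x ∈ R.cell n i := fun n => by
    simpa using mem_iInter.mp hx n
  choose I hI using this
  exact ⟨I, hI, fun n => R.eq_of_mem_cell (R.parent_lt (hI (n + 1)).1) (hI n).1
    (R.cell_succ_subset (hI (n + 1)).1 (hI (n + 1)).2) (hI n).2⟩

def cornerAlt (n i₁ i₂ i₃ i₄ : ℕ) (a : Fin d) : ℝ :=
  R.corner n i₁ a - R.corner n i₂ a + R.corner n i₃ a - R.corner n i₄ a

lemma cornerAlt_zero (i₁ i₂ i₃ i₄ : ℕ) (a : Fin d) : R.cornerAlt 0 i₁ i₂ i₃ i₄ a = 0 := by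
  simp [cornerAlt, corner]

lemma abs_cornerAlt_le {n i₁ i₂ i₃ i₄ : ℕ} {x₁ x₂ x₃ x₄ : EuclideanSpace ℝ (Fin d)}
    (h₁ : x₁ ∈ R.cell n i₁) (h₂ : x₂ ∈ R.cell n i₂) (h₃ : x₃ ∈ R.cell n i₃)
    (h₄ : x₄ ∈ R.cell n i₄) (hx : x₁ - x₂ + x₃ - x₄ = 0) (a : Fin d) :
    |R.cornerAlt n i₁ i₂ i₃ i₄ a| ≤ 2 * R.side n := by
  have hxa : x₁ a - x₂ a + x₃ a - x₄ a = 0 := by simpa using congrArg (· a) hx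
  obtain ⟨l₁, u₁⟩ := h₁ a
  obtain ⟨l₂, u₂⟩ := h₂ a
  obtain ⟨l₃, u₃⟩ := h₃ a
  obtain ⟨l₄, u₄⟩ := h₄ a
  rw [cornerAlt, abs_le]
  constructor <;> linarith

lemma cornerAlt_succ_eq_zero_and_parents_pair (hd : 0 < d) {n i₁ i₂ i₃ i₄ : ℕ}
    (hi₁ : i₁ < R.numCubes (n + 1)) (hi₂ : i₂ < R.numCubes (n + 1))
    (hi₃ : i₃ < R.numCubes (n + 1)) (hi₄ : i₄ < R.numCubes (n + 1))
    (hpar : ∀ a, R.cornerAlt n (i₁ / R.numChildren n) (i₂ / R.numChildren n)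
      (i₃ / R.numChildren n) (i₄ / R.numChildren n) a = 0)
    (hsmall : ∀ a, |R.cornerAlt (n + 1) i₁ i₂ i₃ i₄ a| ≤ 2 * R.side (n + 1)) :
    (∀ a, R.cornerAlt (n + 1) i₁ i₂ i₃ i₄ a = 0) ∧
      (i₁ / R.numChildren n = i₂ / R.numChildren n ∧ i₃ / R.numChildren n = i₄ / R.numChildren n ∨
        i₁ / R.numChildren n = i₄ / R.numChildren n ∧
          i₃ / R.numChildren n = i₂ / R.numChildren n) := by
  set M := R.numChildren n
  set P : ℤ := 4 ^ (i₁ / M) - 4 ^ (i₂ / M) + 4 ^ (i₃ / M) - 4 ^ (i₄ / M)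
  set J : Fin d → ℤ := fun a =>
    (R.digits n i₁ a : ℤ) - R.digits n i₂ a + R.digits n i₃ a - R.digits n i₄ a
  set Z : Fin d → ℤ := fun a =>
    (spacing (R.numCubes n) : ℤ) * J a + if (a : ℕ) = 0 then 3 * P else 0
  have hγ := R.side_pos (n + 1)
  have hcomb : ∀ a, R.cornerAlt (n + 1) i₁ i₂ i₃ i₄ a = R.side (n + 1) * Z a := by
    intro a
    have := hpar a
    simp only [cornerAlt, corner_succ, offset, Z, J, P] at this ⊢
    split_ifs <;> push_cast <;> linear_combination this
  have hZ : ∀ a, |Z a| ≤ 2 := by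
    intro a
    have := hsmall a
    rw [hcomb a, abs_mul, abs_of_pos hγ] at this
    have h' : |(Z a : ℝ)| ≤ 2 := le_of_mul_le_mul_left (by linarith) hγ
    exact_mod_cast h'
  have hPK := three_mul_abs_four_pow_alt_add_two_lt (R.parent_lt hi₁) (R.parent_lt hi₂)
    (R.parent_lt hi₃) (R.parent_lt hi₄)
  have hJ : ∀ a, J a = 0 := fun a => Int.eq_zero_of_abs_mul_add_le (hZ a) (by
    split_ifs
    · rw [abs_mul]; norm_num; linarith
    · simp only [abs_zero]; linarith [abs_nonneg P])
  have hP : P = 0 := by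
    have := hZ ⟨0, hd⟩
    simp only [Z, hJ, mul_zero, zero_add, if_pos rfl, abs_le] at this
    omega
  refine ⟨fun a => by simp [hcomb a, Z, hJ, hP], ?_⟩
  apply four_pow_add_four_pow_inj
  have : (4 : ℤ) ^ (i₁ / M) + 4 ^ (i₃ / M) = 4 ^ (i₂ / M) + 4 ^ (i₄ / M) := by
    linear_combination hP
  exact_mod_cast this

theorem sub_add_sub_ne_zero (hd : 0 < d) {x₁ x₂ x₃ x₄ : EuclideanSpace ℝ (Fin d)}
    (h₁ : x₁ ∈ R.limitSet) (h₂ : x₂ ∈ R.limitSet) (h₃ : x₃ ∈ R.limitSet) (h₄ : x₄ ∈ R.limitSet)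
    (h₁₂ : x₁ ≠ x₂) (h₁₄ : x₁ ≠ x₄) : x₁ - x₂ + x₃ - x₄ ≠ 0 := by
  intro hx
  obtain ⟨I₁, hI₁, hpar₁⟩ := R.exists_address h₁
  obtain ⟨I₂, hI₂, hpar₂⟩ := R.exists_address h₂
  obtain ⟨I₃, hI₃, hpar₃⟩ := R.exists_address h₃
  obtain ⟨I₄, hI₄, hpar₄⟩ := R.exists_address h₄
  have hstep : ∀ n, (∀ a, R.cornerAlt n (I₁ n) (I₂ n) (I₃ n) (I₄ n) a = 0) →
      (∀ a, R.cornerAlt (n + 1) (I₁ (n + 1)) (I₂ (n + 1)) (I₃ (n + 1)) (I₄ (n + 1)) a = 0) ∧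
        (I₁ n = I₂ n ∧ I₃ n = I₄ n ∨ I₁ n = I₄ n ∧ I₃ n = I₂ n) := by
    intro n hn
    have := R.cornerAlt_succ_eq_zero_and_parents_pair hd (hI₁ (n + 1)).1 (hI₂ (n + 1)).1
      (hI₃ (n + 1)).1 (hI₄ (n + 1)).1 (by simpa only [hpar₁, hpar₂, hpar₃, hpar₄] using hn)
      (R.abs_cornerAlt_le (hI₁ _).2 (hI₂ _).2 (hI₃ _).2 (hI₄ _).2 hx)
    rwa [hpar₁, hpar₂, hpar₃, hpar₄] at this
  have hzero : ∀ n a, R.cornerAlt n (I₁ n) (I₂ n) (I₃ n) (I₄ n) a = 0 := by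
    intro n
    induction n with
    | zero => exact R.cornerAlt_zero _ _ _ _
    | succ n ih => exact (hstep n ih).1
  obtain ⟨a, ha⟩ : ∃ a, x₁ a ≠ x₂ a := by
    by_contra! h
    exact h₁₂ (by ext a; exact h a)
  obtain ⟨b, hb⟩ : ∃ b, x₁ b ≠ x₄ b := by
    by_contra! h
    exact h₁₄ (by ext b; exact h b)
  obtain ⟨n, hn⟩ := R.exists_side_lt (lt_min (abs_sub_pos.mpr ha) (abs_sub_pos.mpr hb))
  rcases (hstep n (hzero n)).2 with ⟨h, -⟩ | ⟨h, -⟩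
  · exact ((R.abs_sub_le_side (hI₁ n).2 (h ▸ (hI₂ n).2) a).trans_lt
      (hn.trans_le (min_le_left _ _))).false
  · exact ((R.abs_sub_le_side (hI₁ n).2 (h ▸ (hI₄ n).2) b).trans_lt
      (hn.trans_le (min_le_right _ _))).false

def index (n : ℕ) (t : ℝ) : ℕ := ⌊t * R.numCubes n⌋₊

lemma index_lt {t : ℝ} (ht : t ∈ Ico (0 : ℝ) 1) (n : ℕ) : R.index n t < R.numCubes n := by
  have hk : (0 : ℝ) < R.numCubes n := by exact_mod_cast R.numCubes_pos n
  rw [index, Nat.floor_lt (by nlinarith [ht.1])]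
  nlinarith [ht.2]

lemma index_succ_div (n : ℕ) (t : ℝ) : R.index (n + 1) t / R.numChildren n = R.index n t := by
  have hM : (R.numChildren n : ℝ) ≠ 0 := by exact_mod_cast (R.numChildren_pos n).ne'
  rw [index, index, ← Nat.floor_div_natCast, numCubes_succ, Nat.cast_mul, ← mul_assoc,
    mul_div_cancel_right₀ _ hM]

lemma cell_index_antitone {t : ℝ} (ht : t ∈ Ico (0 : ℝ) 1) :
    Antitone fun n => R.cell n (R.index n t) :=
  antitone_nat_of_succ_le fun n => by
    simpa only [index_succ_div] using R.cell_succ_subset (R.index_lt ht (n + 1))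

def point (t : ℝ) : EuclideanSpace ℝ (Fin d) :=
  WithLp.toLp 2 fun a => ⨆ n, R.corner n (R.index n t) a

lemma point_mem_cell {t : ℝ} (ht : t ∈ Ico (0 : ℝ) 1) (n : ℕ) :
    R.point t ∈ R.cell n (R.index n t) := by
  intro a
  have hbdd : ∀ N, R.corner N (R.index N t) a ≤ R.corner n (R.index n t) a + R.side n := by
    intro N
    have hc := R.corner_mem_cell (max N n) (R.index (max N n) t)
    exact ((R.cell_index_antitone ht (le_max_left N n) hc a).1).trans
      (R.cell_index_antitone ht (le_max_right N n) hc a).2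
  exact ⟨le_ciSup ⟨_, forall_mem_range.mpr hbdd⟩ n, ciSup_le hbdd⟩

lemma point_mem_limitSet {t : ℝ} (ht : t ∈ Ico (0 : ℝ) 1) : R.point t ∈ R.limitSet :=
  mem_iInter.mpr fun n => mem_biUnion (R.index_lt ht n) (R.point_mem_cell ht n)

lemma measurable_point : Measurable R.point := by
  have hcoord : ∀ n a, Measurable fun t => R.corner n (R.index n t) a := fun n a =>
    (measurable_from_nat (f := fun i => R.corner n i a)).comp
      (Nat.measurable_floor.comp (measurable_id.mul_const _))
  exact (PiLp.continuous_toLp 2 _).measurable.comp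
    (measurable_pi_lambda _ fun a => Measurable.iSup fun n => hcoord n a)

def measure : Measure (EuclideanSpace ℝ (Fin d)) :=
  (volume.restrict (Ico (0 : ℝ) 1)).map R.point

lemma measure_limitSet : R.measure R.limitSet = 1 := by
  have hsub : Ico (0 : ℝ) 1 ⊆ R.point ⁻¹' R.limitSet := fun t ht => R.point_mem_limitSet ht
  rw [measure, Measure.map_apply R.measurable_point R.isCompact_limitSet.isClosed.measurableSet,
    Measure.restrict_apply' measurableSet_Ico, inter_eq_right.mpr hsub]
  simp

open scoped Classical in
def cellsMeeting (n : ℕ) (T : Set (EuclideanSpace ℝ (Fin d))) : Finset ℕ :=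
  {i ∈ Finset.range (R.numCubes n) | (R.cell n i ∩ T).Nonempty}

lemma mem_cellsMeeting {n i : ℕ} {T : Set (EuclideanSpace ℝ (Fin d))} :
    i ∈ R.cellsMeeting n T ↔ i < R.numCubes n ∧ (R.cell n i ∩ T).Nonempty := by
  simp [cellsMeeting]

lemma measure_le_card_cellsMeeting (n : ℕ) {T : Set (EuclideanSpace ℝ (Fin d))}
    (hT : IsClosed T) :
    R.measure T ≤ ENNReal.ofReal (#(R.cellsMeeting n T) / R.numCubes n) := by
  have hk : (0 : ℝ) < R.numCubes n := by exact_mod_cast R.numCubes_pos n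
  set I : ℕ → Set ℝ := fun i => Ico (i / R.numCubes n) ((i + 1) / R.numCubes n)
  have hcover : R.point ⁻¹' T ∩ Ico 0 1 ⊆ ⋃ i ∈ R.cellsMeeting n T, I i := by
    rintro t ⟨htT, ht⟩
    refine mem_biUnion (R.mem_cellsMeeting.mpr
      ⟨R.index_lt ht n, R.point t, R.point_mem_cell ht n, htT⟩) ⟨?_, ?_⟩
    · rw [div_le_iff₀ hk]
      exact Nat.floor_le (by nlinarith [ht.1])
    · rw [lt_div_iff₀ hk]
      exact Nat.lt_floor_add_one _
  calc R.measure T = volume (R.point ⁻¹' T ∩ Ico 0 1) := by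
        rw [measure, Measure.map_apply R.measurable_point hT.measurableSet,
          Measure.restrict_apply' measurableSet_Ico]
    _ ≤ ∑ i ∈ R.cellsMeeting n T, volume (I i) :=
        (measure_mono hcover).trans (measure_biUnion_finset_le _ _)
    _ = ∑ _i ∈ R.cellsMeeting n T, ENNReal.ofReal (1 / R.numCubes n) :=
        Finset.sum_congr rfl fun i _ => by rw [Real.volume_Ico]; congr 1; ring
    _ = ENNReal.ofReal (#(R.cellsMeeting n T) / R.numCubes n) := by
        rw [Finset.sum_const, nsmul_eq_mul, ← ENNReal.ofReal_natCast,
          ← ENNReal.ofReal_mul (Nat.cast_nonneg _), mul_one_div]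

def gridRadius (n : ℕ) (t : ℝ) : ℕ :=
  ⌊(t + R.side (n + 1)) / (R.side (n + 1) * spacing (R.numCubes n))⌋₊

lemma parent_eq_of_mem_cellsMeeting {n i i' : ℕ} {T : Set (EuclideanSpace ℝ (Fin d))} {t : ℝ}
    (ht : t < R.side n) (hT : ∀ x ∈ T, ∀ y ∈ T, ∀ a, |x a - y a| ≤ t)
    (hi : i ∈ R.cellsMeeting (n + 1) T) (hi' : i' ∈ R.cellsMeeting (n + 1) T) :
    i / R.numChildren n = i' / R.numChildren n := by
  obtain ⟨hilt, x, hx, hxT⟩ := R.mem_cellsMeeting.mp hi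
  obtain ⟨hilt', y, hy, hyT⟩ := R.mem_cellsMeeting.mp hi'
  by_contra hne
  obtain ⟨a, ha⟩ := R.exists_side_le_abs_sub (R.parent_lt hilt) (R.parent_lt hilt') hne
    (R.cell_succ_subset hilt hx) (R.cell_succ_subset hilt' hy)
  linarith [hT x hxT y hyT a]

lemma digits_mem_Icc_of_mem_cellsMeeting {n i i' : ℕ} {T : Set (EuclideanSpace ℝ (Fin d))}
    {t : ℝ} (ht : t < R.side n) (hT : ∀ x ∈ T, ∀ y ∈ T, ∀ a, |x a - y a| ≤ t)
    (hi : i ∈ R.cellsMeeting (n + 1) T) (hi' : i' ∈ R.cellsMeeting (n + 1) T) (a : Fin d) :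
    (R.digits n i a : ℕ) ∈
      Finset.Icc (R.digits n i' a - R.gridRadius n t) (R.digits n i' a + R.gridRadius n t) := by
  obtain ⟨-, x, hx, hxT⟩ := R.mem_cellsMeeting.mp hi
  obtain ⟨-, y, hy, hyT⟩ := R.mem_cellsMeeting.mp hi'
  have hγK : 0 < R.side (n + 1) * spacing (R.numCubes n) := by
    have := spacing_pos (R.numCubes n)
    have := R.side_pos (n + 1)
    positivity
  have key := (R.abs_corner_sub_le hx hy a).trans (add_le_add_left (hT x hxT y hyT a) _)
  rw [R.corner_sub_corner_of_parent_eq (R.parent_eq_of_mem_cellsMeeting ht hT hi hi'), abs_mul,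
    abs_of_pos hγK] at key
  exact Nat.mem_Icc_of_abs_sub_le ((le_div_iff₀' hγK).mpr (by linarith))

lemma card_cellsMeeting_succ_le {n : ℕ} {T : Set (EuclideanSpace ℝ (Fin d))} {t : ℝ}
    (ht : t < R.side n) (hT : ∀ x ∈ T, ∀ y ∈ T, ∀ a, |x a - y a| ≤ t) :
    #(R.cellsMeeting (n + 1) T) ≤ (2 * R.gridRadius n t + 1) ^ d := by
  set B := R.gridRadius n t
  rcases (R.cellsMeeting (n + 1) T).eq_empty_or_nonempty with hJ | ⟨i₀, hi₀⟩
  · simp [hJ]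
  have hdig := fun i hi a => R.digits_mem_Icc_of_mem_cellsMeeting ht hT (i := i) hi hi₀ a
  calc #(R.cellsMeeting (n + 1) T)
      ≤ #(Finset.Icc (fun a => R.digits n i₀ a - B) (fun a => (R.digits n i₀ a : ℕ) + B)) := by
        refine Finset.card_le_card_of_injOn (fun i a => (R.digits n i a : ℕ))
          (fun i hi => Finset.mem_Icc.mpr ⟨fun a => (Finset.mem_Icc.mp (hdig i hi a)).1,
            fun a => (Finset.mem_Icc.mp (hdig i hi a)).2⟩) fun i hi i' hi' heq => ?_
        exact R.eq_of_parent_eq_of_digits_eq (R.parent_eq_of_mem_cellsMeeting ht hT hi hi')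
          (funext fun a => Fin.ext (congrFun heq a))
    _ = ∏ a : Fin d, #(Finset.Icc (R.digits n i₀ a - B) (R.digits n i₀ a + B)) := Pi.card_Icc _ _
    _ ≤ ∏ _a : Fin d, (2 * B + 1) := Finset.prod_le_prod' fun a _ => by
        rw [Nat.card_Icc]
        omega
    _ = (2 * B + 1) ^ d := by simp

lemma gridRadius_lt_two {n : ℕ} {t : ℝ} (ht : R.side (n + 1) ≤ t)
    (ht' : t < R.side (n + 1) * spacing (R.numCubes n)) : R.gridRadius n t < 2 := by
  have hγ := R.side_pos (n + 1)
  have hK : (12 : ℝ) ≤ spacing (R.numCubes n) := by exact_mod_cast twelve_le_spacing _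
  have hγK : 0 < R.side (n + 1) * spacing (R.numCubes n) := by positivity
  have : R.side (n + 1) ≤ R.side (n + 1) * spacing (R.numCubes n) :=
    le_mul_of_one_le_right hγ.le (by linarith)
  refine (Nat.floor_lt (div_nonneg (by linarith) hγK.le)).mpr ?_
  rw [div_lt_iff₀ hγK]
  push_cast
  linarith

lemma two_mul_gridRadius_add_one_le {n : ℕ} {t : ℝ}
    (ht : R.side (n + 1) * spacing (R.numCubes n) ≤ t) :
    (2 * R.gridRadius n t + 1 : ℝ) ≤ 8 * (t / R.side n) * R.split n := by
  have hK : (12 : ℝ) ≤ spacing (R.numCubes n) := by exact_mod_cast twelve_le_spacing _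
  have hm : (1 : ℝ) ≤ R.split n := by exact_mod_cast R.split_pos n
  have hδ : R.side (n + 1) * spacing (R.numCubes n) * (R.split n + 1) = R.side n := by
    rw [mul_assoc]; exact R.side_succ_mul n
  set γ := R.side (n + 1)
  set K : ℝ := ↑(spacing (R.numCubes n))
  set m : ℝ := ↑(R.split n)
  have hγ : 0 < γ := R.side_pos (n + 1)
  have hγK : 0 < γ * K := by positivity
  have hu : 0 ≤ t / (γ * K * (m + 1)) := div_nonneg (by linarith) (by positivity)
  have : 2 * (t + γ) + γ * K ≤ 4 * t := by nlinarith
  rw [← hδ]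
  calc 2 * (R.gridRadius n t : ℝ) + 1 ≤ 2 * ((t + γ) / (γ * K)) + 1 := by
        gcongr
        exact Nat.floor_le (div_nonneg (by linarith) hγK.le)
    _ ≤ 4 * t / (γ * K) := by
        rw [mul_div_assoc', div_add_one hγK.ne', div_le_div_iff_of_pos_right hγK]
        exact this
    _ = 4 * (t / (γ * K * (m + 1))) * (m + 1) := by field_simp
    _ ≤ 8 * (t / (γ * K * (m + 1))) * m := by nlinarith

/-- `ρ L` is meant to be a scale below which `L * x ^ d ≤ h x`. Each cube is split so finely
that the new side lies below `ρ L` for the `L` that carries `gaugeRule_pow_div_side_le` from one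
stage to the next. -/
def gaugeRule (d : ℕ) (C : ℝ) (ρ : ℝ → ℝ) : SplittingRule d where
  mult k δ := max 1 ⌈δ / (spacing k * ρ ((2 * (spacing k : ℝ)) ^ d / (C * k * δ ^ d)))⌉₊
  mult_pos _ _ := lt_max_of_lt_left one_pos

variable {h : ℝ → ℝ} {C : ℝ} {ρ : ℝ → ℝ}

lemma gaugeRule_side_succ_le (hρ₀ : ∀ L, 0 < ρ L) (n : ℕ) :
    (gaugeRule d C ρ).side (n + 1) ≤
      ρ ((2 * (spacing ((gaugeRule d C ρ).numCubes n) : ℝ)) ^ d /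
        (C * (gaugeRule d C ρ).numCubes n * (gaugeRule d C ρ).side n ^ d)) := by
  set R := gaugeRule d C ρ
  set L := (2 * (spacing (R.numCubes n) : ℝ)) ^ d / (C * R.numCubes n * R.side n ^ d)
  have hK : (0 : ℝ) < spacing (R.numCubes n) := by exact_mod_cast spacing_pos _
  have hsplit : R.side n / (spacing (R.numCubes n) * ρ L) ≤ R.split n :=
    (Nat.le_ceil _).trans (Nat.cast_le.mpr (le_max_right _ _))
  rw [div_le_iff₀ (mul_pos hK (hρ₀ _))] at hsplit
  rw [side_succ, div_le_iff₀ (R.spacing_mul_split_pos n)]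
  nlinarith [hρ₀ L]

lemma gaugeRule_pow_div_side_le (hC : 0 < C) (hC₁ : ∀ t ∈ Ioc (0 : ℝ) 1, t ^ d ≤ C * h t)
    (hρ₀ : ∀ L, 0 < ρ L) (hρ : ∀ L, ∀ x ∈ Ioc 0 (ρ L), L * x ^ d ≤ h x) (n : ℕ) {t : ℝ}
    (ht : t ∈ Ioc 0 ((gaugeRule d C ρ).side n)) :
    (t / (gaugeRule d C ρ).side n) ^ d ≤ C * (gaugeRule d C ρ).numCubes n * h t := by
  set R := gaugeRule d C ρ
  cases n with
  | zero => simpa [side_zero, numCubes_zero] using hC₁ t ht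
  | succ n =>
    have hLt := hρ _ t ⟨ht.1, ht.2.trans (gaugeRule_side_succ_le hρ₀ n)⟩
    have hk : (0 : ℝ) < R.numCubes n := by exact_mod_cast R.numCubes_pos n
    have hm : (1 : ℝ) ≤ R.split n := by exact_mod_cast R.split_pos n
    have hK : (0 : ℝ) < spacing (R.numCubes n) := by exact_mod_cast spacing_pos _
    have hγ : R.side (n + 1) = R.side n / (spacing (R.numCubes n) * (R.split n + 1)) :=
      R.side_succ n
    have hkm : (R.numCubes (n + 1) : ℝ) = R.numCubes n * (R.split n : ℝ) ^ d := by
      rw [numCubes_succ, Nat.cast_mul, numChildren, Nat.cast_pow]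
    set k := R.numCubes n
    set δ := R.side n
    set K : ℝ := ↑(spacing k)
    set m : ℝ := ↑(R.split n)
    have hδ : 0 < δ := R.side_pos n
    calc (t / R.side (n + 1)) ^ d = (K * (m + 1) * t / δ) ^ d := by
          rw [hγ, div_div_eq_mul_div, mul_comm t]
      _ ≤ (2 * K * m * t / δ) ^ d :=
          pow_le_pow_left₀ (by have := ht.1; positivity) (div_le_div_of_nonneg_right
            (by nlinarith [mul_nonneg (mul_nonneg hK.le ht.1.le) (sub_nonneg.mpr hm)]) hδ.le) d
      _ = C * (k * m ^ d) * ((2 * K) ^ d / (C * k * δ ^ d) * t ^ d) := by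
          rw [div_pow, mul_pow, mul_pow, mul_pow]
          field_simp
      _ ≤ C * R.numCubes (n + 1) * h t := by
          rw [hkm]
          gcongr

lemma gaugeRule_two_mul_gridRadius_add_one_pow_le (hC : 0 < C)
    (hC₁ : ∀ t ∈ Ioc (0 : ℝ) 1, t ^ d ≤ C * h t) (hρ₀ : ∀ L, 0 < ρ L)
    (hρ : ∀ L, ∀ x ∈ Ioc 0 (ρ L), L * x ^ d ≤ h x) (hmono : MonotoneOn h (Ici 0)) {n : ℕ}
    {t : ℝ} (ht : (gaugeRule d C ρ).side (n + 1) ≤ t) (ht' : t < (gaugeRule d C ρ).side n) :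
    (2 * (gaugeRule d C ρ).gridRadius n t + 1 : ℝ) ^ d ≤
      8 ^ d * C * (gaugeRule d C ρ).numCubes (n + 1) * h t := by
  set R := gaugeRule d C ρ
  have hγ := R.side_pos (n + 1)
  rcases lt_or_ge t (R.side (n + 1) * spacing (R.numCubes n)) with hsmall | hlarge
  · have hinv := gaugeRule_pow_div_side_le hC hC₁ hρ₀ hρ (n + 1) ⟨hγ, le_rfl⟩
    rw [div_self hγ.ne', one_pow] at hinv
    have hB := R.gridRadius_lt_two ht hsmall
    calc (2 * (R.gridRadius n t : ℝ) + 1) ^ d ≤ 8 ^ d * 1 := by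
          rw [mul_one]
          gcongr
          exact_mod_cast (by omega : 2 * R.gridRadius n t + 1 ≤ 8)
      _ ≤ 8 ^ d * (C * R.numCubes (n + 1) * h (R.side (n + 1))) := by gcongr
      _ ≤ 8 ^ d * C * R.numCubes (n + 1) * h t := by
          rw [mul_assoc (8 ^ d : ℝ) C, mul_assoc (8 ^ d : ℝ)]
          have := R.numCubes_pos (n + 1)
          gcongr
          exact hmono hγ.le (hγ.le.trans ht) ht
  · have hinv := gaugeRule_pow_div_side_le hC hC₁ hρ₀ hρ n ⟨hγ.trans_le ht, ht'.le⟩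
    calc (2 * (R.gridRadius n t : ℝ) + 1) ^ d ≤ (8 * (t / R.side n) * R.split n) ^ d := by
          gcongr
          exact R.two_mul_gridRadius_add_one_le hlarge
      _ = 8 ^ d * (t / R.side n) ^ d * (R.split n : ℝ) ^ d := by rw [mul_pow, mul_pow]
      _ ≤ 8 ^ d * (C * R.numCubes n * h t) * (R.split n : ℝ) ^ d := by gcongr
      _ = 8 ^ d * C * R.numCubes (n + 1) * h t := by
          rw [numCubes_succ, Nat.cast_mul, numChildren, Nat.cast_pow]
          ring

lemma gaugeRule_measure_le (hC : 0 < C) (hC₁ : ∀ t ∈ Ioc (0 : ℝ) 1, t ^ d ≤ C * h t)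
    (hρ₀ : ∀ L, 0 < ρ L) (hρ : ∀ L, ∀ x ∈ Ioc 0 (ρ L), L * x ^ d ≤ h x)
    (hmono : MonotoneOn h (Ici 0)) {T : Set (EuclideanSpace ℝ (Fin d))} (hT : IsClosed T)
    {t : ℝ} (ht₀ : 0 < t) (ht₁ : t < 1) (hTt : ∀ x ∈ T, ∀ y ∈ T, ∀ a, |x a - y a| ≤ t) :
    (gaugeRule d C ρ).measure T ≤ ENNReal.ofReal (8 ^ d * C * h t) := by
  set R := gaugeRule d C ρ
  obtain ⟨n, hn, hn'⟩ := R.exists_side_succ_le_lt ht₀ ht₁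
  have hk : (0 : ℝ) < R.numCubes (n + 1) := by exact_mod_cast R.numCubes_pos _
  refine (R.measure_le_card_cellsMeeting (n + 1) hT).trans (ENNReal.ofReal_le_ofReal ?_)
  rw [div_le_iff₀ hk]
  calc (#(R.cellsMeeting (n + 1) T) : ℝ) ≤ (2 * R.gridRadius n t + 1 : ℝ) ^ d := by
        exact_mod_cast R.card_cellsMeeting_succ_le hn' hTt
    _ ≤ 8 ^ d * C * R.numCubes (n + 1) * h t :=
        gaugeRule_two_mul_gridRadius_add_one_pow_le hC hC₁ hρ₀ hρ hmono hn hn'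
    _ = 8 ^ d * C * h t * R.numCubes (n + 1) := by ring

lemma gaugeRule_measure_le_ediam (hC : 0 < C) (hC₁ : ∀ t ∈ Ioc (0 : ℝ) 1, t ^ d ≤ C * h t)
    (hρ₀ : ∀ L, 0 < ρ L) (hρ : ∀ L, ∀ x ∈ Ioc 0 (ρ L), L * x ^ d ≤ h x)
    (hmono : MonotoneOn h (Ici 0)) (hcont : ∀ t ∈ Ici (0 : ℝ), ContinuousWithinAt h (Ici t) t)
    {S : Set (EuclideanSpace ℝ (Fin d))} (hS : Metric.ediam S ≤ ENNReal.ofReal (1 / 2)) :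
    (gaugeRule d C ρ).measure S ≤
      ENNReal.ofReal (8 ^ d * C) * ENNReal.ofReal (h (Metric.ediam S).toReal) := by
  set s := (Metric.ediam S).toReal
  have hfin : Metric.ediam (closure S) ≠ ⊤ := by
    rw [Metric.ediam_closure]
    exact ne_top_of_le_ne_top ENNReal.ofReal_ne_top hS
  have hs₀ : 0 ≤ s := ENNReal.toReal_nonneg
  have hs₁ : s < 1 := by
    have := ENNReal.toReal_mono ENNReal.ofReal_ne_top hS
    rw [ENNReal.toReal_ofReal (by norm_num)] at this
    linarith
  have hbound : ∀ t ∈ Ioo s 1, (gaugeRule d C ρ).measure S ≤ ENNReal.ofReal (8 ^ d * C * h t) :=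
    fun t ht => (measure_mono subset_closure).trans <|
      gaugeRule_measure_le hC hC₁ hρ₀ hρ hmono isClosed_closure (hs₀.trans_lt ht.1) ht.2
        fun x hx y hy a => (EuclideanSpace.abs_sub_apply_le_ediam hfin hx hy a).trans <| by
          rw [Metric.ediam_closure]
          exact ht.1.le
  have hlim : Tendsto (fun t => ENNReal.ofReal (8 ^ d * C * h t)) (𝓝[>] s)
      (𝓝 (ENNReal.ofReal (8 ^ d * C * h s))) :=
    ENNReal.tendsto_ofReal (((hcont s hs₀).mono Ioi_subset_Ici_self).const_mul _)
  rw [← ENNReal.ofReal_mul (by positivity)]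
  exact ge_of_tendsto hlim (eventually_of_mem (Ioo_mem_nhdsGT hs₁) hbound)

end SplittingRule

end

theorem stmt_17 (d : ℕ) (hd : 0 < d) (h : ℝ → ℝ) (hdim : IsDimFun h)
    (hprec : Prec h (fun x : ℝ => x ^ d)) :
    ∃ E : Set (EuclideanSpace ℝ (Fin d)), IsCompact E ∧ 0 < gaugeMeasure h E ∧
      ∀ x₁ ∈ E, ∀ x₂ ∈ E, ∀ x₃ ∈ E, ∀ x₄ ∈ E,
        x₁ ≠ x₂ → x₁ ≠ x₃ → x₁ ≠ x₄ → x₂ ≠ x₃ → x₂ ≠ x₄ → x₃ ≠ x₄ →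
          x₁ - x₂ + x₃ - x₄ ≠ 0 := by
  obtain ⟨C, hC, hC₁⟩ := hdim.exists_pow_le_const_mul hprec
  obtain ⟨-, hpos, hmono, hcont⟩ := hdim
  choose ρ hρ₀ hρ using hprec.exists_scale hpos
  set R := SplittingRule.gaugeRule d C ρ
  refine ⟨R.limitSet, R.isCompact_limitSet, ?_, fun x₁ h₁ x₂ h₂ x₃ h₃ x₄ h₄ h₁₂ _ h₁₄ _ _ _ =>
    R.sub_add_sub_ne_zero hd h₁ h₂ h₃ h₄ h₁₂ h₁₄⟩
  refine Measure.mkMetric_pos_of_le ENNReal.ofReal_ne_top (by norm_num)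
    (fun S hS => SplittingRule.gaugeRule_measure_le_ediam hC hC₁ hρ₀ hρ hmono hcont hS) ?_
  rw [R.measure_limitSet]
  exact one_pos
end
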